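/- arXiv:1402.5890 — 9 statements merged into one kernel-verified Lean document; each statement's English description precedes it below -/
import Mathlib

section
/- For n ≥ 2, the n×n real symmetric tridiagonal matrix A(n) with diagonal entries a_{ii} = n−1, off-diagonal entries a_{i,i+1} = a_{i+1,i} = (1/2)√(i(2n−i−1)) for i = 1,…,n−2, and a_{n−1,n} = a_{n,n−1} = √(n(n−1)/2), has eigenvalues exactly {0, 2, 4, …, 2n−2}. -/
/-- The 1-indexed off-diagonal entries of the matrix `A(n)`. -/
noncomputable def offA (n k : ℕ) : ℝ :=
  if k = n - 1 then Real.sqrt (n * (n - 1) / 2)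
  else (1 / 2) * Real.sqrt (k * (2 * n - k - 1))

/-- The matrix `A(n)`: symmetric tridiagonal, diagonal `n-1`,
super/sub-diagonal `offA n k` at (1-indexed) position `(k, k+1)`. -/
noncomputable def Amat (n : ℕ) : Matrix (Fin n) (Fin n) ℝ :=
  Matrix.of fun i j =>
    if (i : ℕ) = (j : ℕ) then (n : ℝ) - 1
    else if (i : ℕ) + 1 = (j : ℕ) then offA n ((i : ℕ) + 1)
    else if (j : ℕ) + 1 = (i : ℕ) then offA n ((j : ℕ) + 1)
    else 0

/-!
Conjugated by the diagonal matrix `weight n`, `A(n)` becomes the tridiagonal matrix with rational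
entries: `n - 1` on the diagonal, `(i + 1)/2` above it, `(2n - 1 - i)/2` below it in row `i`, except
`n` in the last row. On a coefficient vector `(c₀, …, c_{n-1})` this matrix acts as the coefficient
form of the differential equation `(1 - X²) g' = (b - a - (a + b) X) g` satisfied by
`g = (1 - X)^a (1 + X)^b`. For `a = 2(n - 1 - k)`, `b = 2k` the first `n` coefficients of `g`
therefore give an eigenvector for `2k`; the last row closes up because `g` is palindromic of degree
`2n - 2`, so `c_n = c_{n-2}`. These `n` eigenvalues are distinct, so they exhaust the spectrum.
-/

open Polynomial Matrix

namespace Polynomial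

theorem reflect_pow_of_natDegree_le {R : Type*} [Semiring R] {p : R[X]} {d : ℕ}
    (hp : p.natDegree ≤ d) (m : ℕ) : reflect (m * d) (p ^ m) = reflect d p ^ m := by
  induction m with
  | zero => simp [reflect_one]
  | succ m ih =>
    rw [Nat.succ_mul, pow_succ, pow_succ, reflect_mul _ _ (natDegree_pow_le_of_le m hp) hp, ih]

variable {R : Type*} [CommRing R]

theorem one_sub_X_mul_derivative_pow (a : ℕ) :
    (1 - X) * derivative ((1 - X : R[X]) ^ a) = -C (a : R) * (1 - X) ^ a := by
  cases a with
  | zero => simp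
  | succ a => rw [derivative_pow_succ]; simp; ring

theorem one_add_X_mul_derivative_pow (b : ℕ) :
    (1 + X) * derivative ((1 + X : R[X]) ^ b) = C (b : R) * (1 + X) ^ b := by
  cases b with
  | zero => simp
  | succ b => rw [derivative_pow_succ]; simp; ring

theorem coeff_X_mul_derivative (p : R[X]) (i : ℕ) :
    (X * derivative p).coeff i = i * p.coeff i := by
  cases i with
  | zero => simp
  | succ i => rw [coeff_X_mul, coeff_derivative]; push_cast; ring

end Polynomial

section Krawtchouk

variable (R : Type*) [CommRing R]

noncomputable def krawtchoukGF (a b : ℕ) : R[X] := (1 - X) ^ a * (1 + X) ^ b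

variable {R}

@[simp]
theorem coeff_krawtchoukGF_zero (a b : ℕ) : (krawtchoukGF R a b).coeff 0 = 1 := by
  simp [krawtchoukGF, coeff_zero_eq_eval_zero]

theorem one_sub_X_sq_mul_derivative_krawtchoukGF (a b : ℕ) :
    (1 - X ^ 2) * derivative (krawtchoukGF R a b) =
      (C ((b : R) - a) - C ((a : R) + b) * X) * krawtchoukGF R a b := by
  have ha := one_sub_X_mul_derivative_pow (R := R) a
  have hb := one_add_X_mul_derivative_pow (R := R) b
  rw [krawtchoukGF, derivative_mul, map_sub, map_add]
  linear_combination (1 + X) * (1 + X : R[X]) ^ b * ha + (1 - X) * (1 - X : R[X]) ^ a * hb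

/-- `(X * g).coeff i` is `g.coeff (i - 1)`, read as `0` at `i = 0`. -/
theorem coeff_krawtchoukGF_recurrence (a b i : ℕ) :
    ((i : R) + 1) * (krawtchoukGF R a b).coeff (i + 1) +
        ((a : R) + b + 1 - i) * (X * krawtchoukGF R a b).coeff i =
      ((b : R) - a) * (krawtchoukGF R a b).coeff i := by
  set g := krawtchoukGF R a b
  have h := congrArg (coeff · i) (one_sub_X_sq_mul_derivative_krawtchoukGF (R := R) a b)
  have hXX : (X * (X * derivative g)).coeff i = ((i : R) - 1) * (X * g).coeff i := by
    have : X * (X * derivative g) = X * derivative (X * g) - X * g := by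
      rw [derivative_mul, derivative_X]; ring
    rw [this, coeff_sub, coeff_X_mul_derivative]; ring
  simp only [sub_mul, one_mul, coeff_sub, coeff_C_mul, mul_assoc, coeff_derivative] at h
  rw [sq, mul_assoc, hXX] at h
  linear_combination h

theorem coeff_krawtchoukGF_sub (a b : ℕ) {j : ℕ} (hj : j ≤ a + b) :
    (krawtchoukGF R a b).coeff (a + b - j) = (-1) ^ a * (krawtchoukGF R a b).coeff j := by
  have h1 : (1 - X : R[X]).natDegree ≤ 1 :=
    (natDegree_sub_le _ _).trans (max_le (by simp) natDegree_X_le)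
  have h2 : (1 + X : R[X]).natDegree ≤ 1 :=
    (natDegree_add_le _ _).trans (max_le (by simp) natDegree_X_le)
  have hrefl : reflect (a + b) (krawtchoukGF R a b) = C ((-1) ^ a) * krawtchoukGF R a b := by
    have hmul := reflect_mul _ _ (natDegree_pow_le_of_le a h1) (natDegree_pow_le_of_le b h2)
    have ha : reflect a ((1 - X : R[X]) ^ a) = reflect 1 (1 - X) ^ a := by
      simpa using reflect_pow_of_natDegree_le h1 a
    have hb : reflect b ((1 + X : R[X]) ^ b) = reflect 1 (1 + X) ^ b := by
      simpa using reflect_pow_of_natDegree_le h2 b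
    simp only [mul_one] at hmul
    rw [krawtchoukGF, hmul, ha, hb, reflect_sub, reflect_add, reflect_one, reflect_one_X, pow_one,
      show (X - 1 : R[X]) = -1 * (1 - X) by ring, mul_pow, map_pow, map_neg, map_one]
    ring
  have := congrArg (coeff · j) hrefl
  rwa [coeff_reflect, revAt_le hj, coeff_C_mul] at this

end Krawtchouk

theorem Module.End.spectrum_eq_range_of_hasEigenvector {K V ι : Type*} [Field K]
    [AddCommGroup V] [Module K V] [FiniteDimensional K V] [Fintype ι] {f : Module.End K V}
    {μ : ι → K} (hμ : Function.Injective μ) (hcard : Module.finrank K V ≤ Fintype.card ι)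
    {v : ι → V} (hv : ∀ i, f.HasEigenvector (μ i) (v i)) :
    spectrum K f = Set.range μ := by
  ext x
  rw [← Module.End.hasEigenvalue_iff_mem_spectrum]
  refine ⟨fun hx => ?_, fun ⟨i, hi⟩ => hi ▸ Module.End.hasEigenvalue_of_hasEigenvector (hv i)⟩
  by_contra hx'
  obtain ⟨w, hw⟩ := hx.exists_hasEigenvector
  have hinj : Function.Injective fun o : Option ι => o.elim x μ := by
    rintro (_ | i) (_ | j) h
    · rfl
    · exact absurd ⟨j, h.symm⟩ hx'
    · exact absurd ⟨i, h⟩ hx'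
    · exact congrArg some (hμ h)
  have hli := Module.End.eigenvectors_linearIndependent' f _ hinj (fun o => o.elim w v)
    (by rintro (_ | i); exacts [hw, hv i])
  have := hli.fintype_card_le_finrank
  rw [Fintype.card_option] at this
  omega

theorem offA_zero (n : ℕ) : offA n 0 = 0 := by
  unfold offA
  split_ifs with h
  · obtain rfl | rfl : n = 0 ∨ n = 1 := by omega
    all_goals simp
  · simp

theorem sq_offA_of_lt {n j : ℕ} (hj : j + 1 < n) :
    offA n j ^ 2 = j * (2 * n - j - 1) / 4 := by
  rw [offA, if_neg (by omega), mul_pow, Real.sq_sqrt]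
  · ring
  · have : (j : ℝ) + 1 ≤ n := by exact_mod_cast hj.le
    have : (0 : ℝ) ≤ j := j.cast_nonneg
    nlinarith

theorem sq_offA_pred (n : ℕ) : offA n (n - 1) ^ 2 = n * (n - 1) / 2 := by
  rw [offA, if_pos rfl, Real.sq_sqrt]
  rcases n with _ | n
  · simp
  · rw [Nat.cast_succ, add_sub_cancel_right]; positivity

theorem offA_pos {n j : ℕ} (hj₀ : 0 < j) (hj : j < n) : 0 < offA n j := by
  have hsq : 0 < offA n j ^ 2 := by
    have hj₀' : (1 : ℝ) ≤ j := by exact_mod_cast hj₀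
    have hj' : (j : ℝ) + 1 ≤ n := by exact_mod_cast hj
    rcases lt_or_eq_of_le (Nat.le_sub_one_of_lt hj) with h | rfl
    · rw [sq_offA_of_lt (by omega)]; nlinarith
    · rw [sq_offA_pred]; nlinarith
  have : 0 ≤ offA n j := by unfold offA; split_ifs <;> positivity
  exact lt_of_le_of_ne this (by rintro h; simp [← h] at hsq)

namespace Amat

noncomputable def weight (n : ℕ) : ℕ → ℝ
  | 0 => 1
  | j + 1 => (j + 1) / (2 * offA n (j + 1)) * weight n j

theorem offA_mul_weight_succ {n j : ℕ} (hj : j + 1 < n) :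
    offA n (j + 1) * weight n (j + 1) = (j + 1) / 2 * weight n j := by
  have := (offA_pos j.succ_pos hj).ne'
  rw [weight]
  field_simp

theorem offA_mul_weight (n j : ℕ) :
    offA n (j + 1) * weight n j = 2 * offA n (j + 1) ^ 2 / (j + 1) * weight n (j + 1) := by
  rw [weight]
  rcases eq_or_ne (offA n (j + 1)) 0 with h | h
  · simp [h]
  · field_simp

theorem offA_mul_weight_of_add_two_lt {n j : ℕ} (hj : j + 2 < n) :
    offA n (j + 1) * weight n j = (2 * n - j - 2) / 2 * weight n (j + 1) := by
  rw [offA_mul_weight, sq_offA_of_lt (by omega)]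
  field_simp
  push_cast
  ring

theorem offA_mul_weight_of_add_two_eq {n j : ℕ} (hj : j + 2 = n) :
    offA n (j + 1) * weight n j = n * weight n (j + 1) := by
  rw [offA_mul_weight, show j + 1 = n - 1 by omega, sq_offA_pred, show n - 1 = j + 1 by omega,
    ← hj]
  field_simp
  push_cast
  ring

/-- At `i = 0` the truncated index `i - 1` is harmless, since `offA n 0 = 0`. -/
theorem mulVec_apply (n : ℕ) (f : ℕ → ℝ) {i : ℕ} (hi : i < n) :
    (Amat n *ᵥ fun j => f j) ⟨i, hi⟩ =
      offA n i * f (i - 1) + (n - 1) * f i +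
        if i + 1 < n then offA n (i + 1) * f (i + 1) else 0 := by
  have hrow : ∀ j, (if i = j then (n : ℝ) - 1 else if i + 1 = j then offA n (i + 1)
        else if j + 1 = i then offA n (j + 1) else 0) * f j =
      (if j = i - 1 then offA n i * f (i - 1) else 0) + (if j = i then (n - 1) * f i else 0) +
        (if j = i + 1 then offA n (i + 1) * f (i + 1) else 0) := by
    intro j
    rcases i with _ | i <;> split_ifs <;> subst_vars <;>
      first | omega | contradiction | simp [offA_zero]
  simp only [Matrix.mulVec, dotProduct, Amat, Matrix.of_apply]
  rw [Fin.sum_univ_eq_sum_range (fun j => (if i = j then (n : ℝ) - 1 else if i + 1 = j then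
    offA n (i + 1) else if j + 1 = i then offA n (j + 1) else 0) * f j) n]
  simp only [hrow, Finset.sum_add_distrib, Finset.sum_ite_eq', Finset.mem_range]
  simp [hi, show i - 1 < n by omega]

noncomputable def eigenvector (n k j : ℕ) : ℝ :=
  (krawtchoukGF ℝ (2 * (n - 1 - k)) (2 * k)).coeff j * weight n j

theorem eigenvector_zero (n k : ℕ) : eigenvector n k 0 = 1 := by
  simp [eigenvector, weight]

theorem mulVec_eigenvector {n k : ℕ} (hk : k < n) :
    Amat n *ᵥ (fun j : Fin n => eigenvector n k j) =
      (2 * k : ℝ) • fun j : Fin n => eigenvector n k j := by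
  have ha : ((2 * (n - 1 - k) : ℕ) : ℝ) = 2 * n - 2 - 2 * k := by
    push_cast [Nat.cast_sub (show 1 ≤ n by omega), Nat.cast_sub (show k ≤ n - 1 by omega)]; ring
  have hrec := coeff_krawtchoukGF_recurrence (R := ℝ) (2 * (n - 1 - k)) (2 * k)
  simp only [ha] at hrec
  ext ⟨i, hi⟩
  rw [mulVec_apply _ _ hi, Pi.smul_apply, smul_eq_mul]
  simp only [eigenvector]
  set c := (krawtchoukGF ℝ (2 * (n - 1 - k)) (2 * k)).coeff
  rcases i with _ | j
  · split_ifs with h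
    · have hR := offA_mul_weight_succ h
      have h0 := hrec 0
      simp only [offA_zero, coeff_X_mul_zero] at hR h0 ⊢
      push_cast at h0 hR
      linear_combination (c 1) * hR + (weight n 0 / 2) * h0
    · obtain rfl : k = 0 := by omega
      obtain rfl : n = 1 := by omega
      simp [offA_zero]
  · have hc := hrec (j + 1)
    rw [coeff_X_mul] at hc
    push_cast at hc
    rw [Nat.add_sub_cancel]
    split_ifs with h
    · have hL := offA_mul_weight_of_add_two_lt h
      have hR := offA_mul_weight_succ h
      push_cast at hR
      linear_combination (c j) * hL + (c (j + 2)) * hR + (weight n (j + 1) / 2) * hc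
    · have hL := offA_mul_weight_of_add_two_eq (show j + 2 = n by omega)
      have hsymm := coeff_krawtchoukGF_sub (R := ℝ) (2 * (n - 1 - k)) (2 * k)
        (show j ≤ 2 * (n - 1 - k) + 2 * k by omega)
      rw [show 2 * (n - 1 - k) + 2 * k - j = j + 1 + 1 by omega,
        Even.neg_one_pow ⟨n - 1 - k, by omega⟩, one_mul] at hsymm
      linear_combination (c j) * hL + (weight n (j + 1) / 2) * hc -
        (weight n (j + 1) * (j + 2) / 2) * hsymm

end Amat

theorem stmt_1_general (n : ℕ) :
    spectrum ℝ (Amat n) = {x : ℝ | ∃ k < n, x = 2 * (k : ℝ)} := by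
  have hv : ∀ k : Fin n, Module.End.HasEigenvector (Matrix.toLin' (Amat n)) (2 * (k : ℕ))
      fun j : Fin n => Amat.eigenvector n k j := by
    intro k
    refine ⟨Module.End.mem_eigenspace_iff.mpr ?_, fun h => ?_⟩
    · rw [Matrix.toLin'_apply, Amat.mulVec_eigenvector k.isLt]
    · simpa [Amat.eigenvector_zero] using congrFun h ⟨0, k.pos⟩
  rw [← Matrix.spectrum_toLin', Module.End.spectrum_eq_range_of_hasEigenvector _ (by simp) hv]
  · ext x
    simp [Fin.exists_iff, eq_comm]
  · intro i j h
    simpa [Fin.ext_iff] using h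

theorem stmt_1 (n : ℕ) (hn : 2 ≤ n) :
    spectrum ℝ (Amat n) = {x : ℝ | ∃ k < n, x = 2 * (k : ℝ)} :=
  stmt_1_general n
end

section
/- For n ≥ 2, the leading principal (n−1)×(n−1) submatrix A°(n) of A(n), obtained by deleting the last row and column, has eigenvalues exactly {1, 3, 5, …, 2n−3}. -/
/-- The leading principal submatrix of `A(n)` of order `n-1`. -/
noncomputable def AmatSub (n : ℕ) : Matrix (Fin (n - 1)) (Fin (n - 1)) ℝ :=
  (Amat n).submatrix (Fin.castLE (Nat.sub_le n 1)) (Fin.castLE (Nat.sub_le n 1))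

/-! `A°(n)` is the truncation to the first `n - 1` basis vectors of `(n - 1) + J_x`, where `J_x`
is the spin-`(n - 1)` angular momentum matrix acting on `2n - 1` states. Conjugating by
`diag √(C(2n - 2, j))` turns the eigenvalue equation of `(n - 1) + J_x` into a three-term
recurrence, which the coefficients of `p = (1 - X)^a (1 + X)^b` with `a + b = 2n - 2` satisfy with
eigenvalue `b`, because `(1 - X²) p' + (a + b)(1 + X) p = 2b p`. For odd `a` the polynomial is
antisymmetric under `p ↦ X^(a+b) p(1/X)`, so its middle coefficient vanishes and the eigenvector
survives the truncation. The choices `b = 1, 3, …, 2n - 3` give `n - 1` distinct eigenvalues,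
hence all of them. -/

open Polynomial Matrix

namespace Matrix

variable {K ι : Type*} [Field K] [Fintype ι] [DecidableEq ι]

lemma mem_spectrum_of_mulVec_eq_smul {A : Matrix ι ι K} {μ : K} {v : ι → K} (hv : v ≠ 0)
    (hAv : A *ᵥ v = μ • v) : μ ∈ spectrum K A := by
  rw [← spectrum_toLin']
  exact (Module.End.hasEigenvalue_of_hasEigenvector
    ⟨Module.End.mem_eigenspace_iff.mpr (by rwa [toLin'_apply]), hv⟩).mem_spectrum

theorem spectrum_eq_range_of_injective (A : Matrix ι ι K) (μ : ι → K)
    (hμ : Function.Injective μ) (hv : ∀ i, ∃ v ≠ 0, A *ᵥ v = μ i • v) :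
    spectrum K A = Set.range μ := by
  have hne : A.charpoly ≠ 0 := A.charpoly_monic.ne_zero
  have hsub : Finset.univ.val.map μ ≤ A.charpoly.roots := by
    rw [Multiset.le_iff_subset (Finset.univ.nodup.map hμ)]
    rintro _ hx
    obtain ⟨i, -, rfl⟩ := Multiset.mem_map.mp hx
    obtain ⟨v, hv0, hAv⟩ := hv i
    exact (mem_roots hne).mpr (mem_spectrum_iff_isRoot_charpoly.mp
      (mem_spectrum_of_mulVec_eq_smul hv0 hAv))
  have hroots : Finset.univ.val.map μ = A.charpoly.roots :=
    Multiset.eq_of_le_of_card_le hsub <| by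
      simpa [charpoly_natDegree_eq_dim] using A.charpoly.card_roots'
  ext x
  rw [mem_spectrum_iff_isRoot_charpoly, ← mem_roots hne, ← hroots]
  simp

section Tridiagonal

variable {R : Type*}

def tridiagEntry [Zero R] (d e : ℕ → R) (i j : ℕ) : R :=
  if i = j then d i
  else if i + 1 = j then e (i + 1)
  else if j + 1 = i then e (j + 1)
  else 0

def tridiag [Zero R] (N : ℕ) (d e : ℕ → R) : Matrix (Fin N) (Fin N) R :=
  of fun i j => tridiagEntry d e i j

theorem tridiagEntry_mul [NonUnitalNonAssocSemiring R] {d e : ℕ → R} (he : e 0 = 0)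
    (u : ℕ → R) (i j : ℕ) :
    tridiagEntry d e i j * u j = (if j = i then d i * u i else 0)
      + (if j = i + 1 then e (i + 1) * u (i + 1) else 0)
      + (if j = i - 1 then e i * u (i - 1) else 0) := by
  unfold tridiagEntry
  split_ifs <;> (try omega) <;> subst_vars
  · obtain rfl : j = 0 := by omega
    simp [he]
  all_goals simp

/-- `he` kills the term `e 0 * u (0 - 1)` of row `0`, where `u (0 - 1) = u 0`. -/
theorem tridiag_mulVec [NonUnitalNonAssocSemiring R] {N : ℕ} {d e u : ℕ → R} (he : e 0 = 0)
    (hu : u N = 0) (i : Fin N) :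
    (tridiag N d e *ᵥ fun j => u j) i = d i * u i + e (i + 1) * u (i + 1) + e i * u (i - 1) := by
  have hi := i.isLt
  simp only [mulVec, dotProduct, tridiag, of_apply]
  rw [Fin.sum_univ_eq_sum_range (fun j => tridiagEntry d e i j * u j)]
  simp only [tridiagEntry_mul he, Finset.sum_add_distrib, Finset.sum_ite_eq', Finset.mem_range,
    if_pos hi, if_pos (show (i : ℕ) - 1 < N by omega)]
  split_ifs with hN
  · rfl
  · rw [show (i : ℕ) + 1 = N by omega, hu, mul_zero]

end Tridiagonal

end Matrix

namespace Polynomial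

variable {R : Type*}

theorem reflect_pow [Semiring R] {f : R[X]} {N : ℕ} (hf : f.natDegree ≤ N) (k : ℕ) :
    reflect (N * k) (f ^ k) = reflect N f ^ k := by
  induction k with
  | zero => simp
  | succ k ih =>
    rw [pow_succ, mul_add, mul_one,
      reflect_mul _ _ (mul_comm k N ▸ natDegree_pow_le_of_le k hf) hf, ih, pow_succ]

theorem coeff_eq_zero_of_reflect_eq_neg [Ring R] [NoZeroDivisors R] [CharZero R] {p : R[X]}
    {m : ℕ} (h : reflect (2 * m) p = -p) : p.coeff m = 0 := by
  have hm := congrArg (coeff · m) h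
  simp only [coeff_reflect, coeff_neg] at hm
  rwa [revAt_le (by omega), show 2 * m - m = m by omega, self_eq_neg] at hm

theorem mul_derivative_pow [CommSemiring R] (f : R[X]) (k : ℕ) :
    f * derivative (f ^ k) = C (k : R) * derivative f * f ^ k := by
  cases k with
  | zero => simp
  | succ k => rw [derivative_pow_succ]; push_cast; ring

end Polynomial

/-- Its `j`-th coefficient is the Krawtchouk polynomial `K_j(a; a + b)`. -/
noncomputable def krawtchoukGen (R : Type*) [CommRing R] (a b : ℕ) : R[X] :=
  (1 - X) ^ a * (1 + X) ^ b

section Krawtchouk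

variable {R : Type*} [CommRing R]

theorem krawtchoukGen_ode (a b : ℕ) :
    (1 - X ^ 2) * derivative (krawtchoukGen R a b)
      + C ((a : R) + b) * (1 + X) * krawtchoukGen R a b = C (2 * b : R) * krawtchoukGen R a b := by
  have ha := mul_derivative_pow (1 - X : R[X]) a
  have hb := mul_derivative_pow (1 + X : R[X]) b
  simp only [derivative_sub, derivative_add, derivative_one, derivative_X] at ha hb
  rw [krawtchoukGen, derivative_mul, C_add, C_mul, C_ofNat]
  linear_combination (1 + X) * (1 + X) ^ b * ha + (1 - X) * (1 - X) ^ a * hb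

theorem krawtchoukGen_coeff_one (a b : ℕ) :
    (krawtchoukGen R a b).coeff 1 + (a + b) * (krawtchoukGen R a b).coeff 0
      = 2 * b * (krawtchoukGen R a b).coeff 0 := by
  have h := congrArg (coeff · 0) (krawtchoukGen_ode (R := R) a b)
  simpa [sub_mul, add_mul, mul_add, coeff_derivative, mul_comm] using h

theorem krawtchoukGen_coeff_succ_succ (a b j : ℕ) :
    (j + 2) * (krawtchoukGen R a b).coeff (j + 2) + (a + b) * (krawtchoukGen R a b).coeff (j + 1)
      + (a + b - j) * (krawtchoukGen R a b).coeff j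
      = 2 * b * (krawtchoukGen R a b).coeff (j + 1) := by
  have h := congrArg (coeff · (j + 1)) (krawtchoukGen_ode (R := R) a b)
  have hX : ((X : R[X]) * derivative (krawtchoukGen R a b)).coeff j
      = j * (krawtchoukGen R a b).coeff j := by
    cases j <;> simp [coeff_derivative, mul_comm]
  simp only [sq, sub_mul, add_mul, one_mul, mul_assoc, coeff_add, coeff_sub, coeff_C_mul,
    coeff_X_mul, coeff_derivative, hX] at h
  push_cast at h
  linear_combination h

theorem krawtchoukGen_coeff_zero (a b : ℕ) : (krawtchoukGen R a b).coeff 0 = 1 := by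
  simp [krawtchoukGen, coeff_zero_eq_eval_zero]

theorem reflect_krawtchoukGen (a b : ℕ) :
    reflect (a + b) (krawtchoukGen R a b) = (-1) ^ a * krawtchoukGen R a b := by
  have h₁ : (1 - X : R[X]).natDegree ≤ 1 := by compute_degree
  have h₂ : (1 + X : R[X]).natDegree ≤ 1 := by compute_degree
  have hpow {f : R[X]} (hf : f.natDegree ≤ 1) (k : ℕ) :
      reflect k (f ^ k) = reflect 1 f ^ k := by
    simpa using reflect_pow hf k
  rw [krawtchoukGen, reflect_mul _ _ (by simpa using natDegree_pow_le_of_le a h₁)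
      (by simpa using natDegree_pow_le_of_le b h₂), hpow h₁, hpow h₂]
  simp only [reflect_sub, reflect_add, reflect_one, reflect_one_X, pow_one]
  rw [← neg_sub, neg_pow, add_comm X]
  ring

theorem krawtchoukGen_coeff_eq_zero_of_odd [NoZeroDivisors R] [CharZero R] {a b m : ℕ}
    (ha : Odd a) (hab : a + b = 2 * m) : (krawtchoukGen R a b).coeff m = 0 :=
  coeff_eq_zero_of_reflect_eq_neg <| by
    rw [← hab, reflect_krawtchoukGen, ha.neg_one_pow, neg_one_mul]

end Krawtchouk

theorem Real.sqrt_mul_mul_sqrt_of_mul_eq {a b x y : ℝ} (ha : 0 ≤ a) (hb : 0 ≤ b)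
    (h : b * x = a * y) : √(a * b) * √x = a * √y := by
  calc √(a * b) * √x = √(a * (b * x)) := by
        rw [← Real.sqrt_mul (mul_nonneg ha hb), mul_assoc]
    _ = a * √y := by
        rw [h, ← mul_assoc, Real.sqrt_mul (mul_self_nonneg a), Real.sqrt_mul_self ha]

theorem Nat.cast_sub_mul_choose {R : Type*} [Ring R] (M j : ℕ) :
    ((M : R) - j) * M.choose j = (j + 1) * M.choose (j + 1) := by
  rcases le_or_gt j M with hj | hj
  · have h : (M - j) * M.choose j = (j + 1) * M.choose (j + 1) := by
      rw [mul_comm, ← Nat.choose_succ_right_eq, mul_comm]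
    rw [← Nat.cast_sub hj]
    exact_mod_cast congrArg (Nat.cast : ℕ → R) h
  · simp [Nat.choose_eq_zero_of_lt hj, Nat.choose_eq_zero_of_lt (Nat.lt_succ_of_lt hj)]

/-- `⟨j - 1| J_x |j⟩` for spin `M / 2`, with basis `|0⟩, …, |M⟩`. -/
noncomputable def spinOffDiag (M j : ℕ) : ℝ := (1 / 2) * √(j * (M + 1 - j))

theorem spinOffDiag_zero (M : ℕ) : spinOffDiag M 0 = 0 := by simp [spinOffDiag]

section SpinMatrix

variable {M j : ℕ}

theorem spinOffDiag_succ_mul_sqrt_choose (hj : j ≤ M) :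
    spinOffDiag M (j + 1) * √(M.choose j) = (j + 1) / 2 * √(M.choose (j + 1)) := by
  have h := Real.sqrt_mul_mul_sqrt_of_mul_eq (a := j + 1) (b := M - j) (by positivity)
    (by simpa using hj) (Nat.cast_sub_mul_choose M j)
  rw [spinOffDiag, Nat.cast_succ, add_sub_add_right_eq_sub]
  linear_combination (1 / 2) * h

theorem spinOffDiag_succ_mul_sqrt_choose_succ (hj : j ≤ M) :
    spinOffDiag M (j + 1) * √(M.choose (j + 1)) = (M - j) / 2 * √(M.choose j) := by
  have h := Real.sqrt_mul_mul_sqrt_of_mul_eq (a := M - j) (b := j + 1) (by simpa using hj)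
    (by positivity) (Nat.cast_sub_mul_choose M j).symm
  rw [spinOffDiag, Nat.cast_succ, add_sub_add_right_eq_sub, mul_comm ((j : ℝ) + 1)]
  linear_combination (1 / 2) * h

end SpinMatrix

noncomputable def krawtchoukVec (a b j : ℕ) : ℝ :=
  (krawtchoukGen ℝ a b).coeff j / √((a + b).choose j)

theorem krawtchoukVec_zero (a b : ℕ) : krawtchoukVec a b 0 = 1 := by
  simp [krawtchoukVec, krawtchoukGen_coeff_zero]

theorem krawtchoukVec_eq_zero_of_odd {a b m : ℕ} (ha : Odd a) (hab : a + b = 2 * m) :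
    krawtchoukVec a b m = 0 := by
  rw [krawtchoukVec, krawtchoukGen_coeff_eq_zero_of_odd ha hab, zero_div]

theorem krawtchoukVec_row {a b i : ℕ} (hi : i < a + b) :
    (a + b) / 2 * krawtchoukVec a b i + spinOffDiag (a + b) (i + 1) * krawtchoukVec a b (i + 1)
      + spinOffDiag (a + b) i * krawtchoukVec a b (i - 1) = b * krawtchoukVec a b i := by
  have hw {k : ℕ} (hk : k ≤ a + b) : √((a + b).choose k) ≠ 0 :=
    Real.sqrt_ne_zero'.mpr (by exact_mod_cast Nat.choose_pos hk)
  have hmul {e c w w' q : ℝ} (hw : w ≠ 0) (hw' : w' ≠ 0) (h : e * w = c * w') :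
      e * (q / w') = c * q / w := by
    field_simp
    linear_combination q * h
  unfold krawtchoukVec
  cases i with
  | zero =>
    have h₁ := hmul (q := (krawtchoukGen ℝ a b).coeff 1) (hw (Nat.zero_le _)) (hw hi)
      (spinOffDiag_succ_mul_sqrt_choose (by omega))
    have hrec := krawtchoukGen_coeff_one (R := ℝ) a b
    rw [h₁, spinOffDiag_zero]
    field_simp
    linear_combination hrec
  | succ j =>
    have h₂ := hmul (q := (krawtchoukGen ℝ a b).coeff (j + 2)) (hw hi.le) (hw hi)
      (spinOffDiag_succ_mul_sqrt_choose hi.le)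
    have h₀ := hmul (q := (krawtchoukGen ℝ a b).coeff j) (hw hi.le) (hw (by omega))
      (spinOffDiag_succ_mul_sqrt_choose_succ (by omega))
    have hrec := krawtchoukGen_coeff_succ_succ (R := ℝ) a b j
    rw [h₂, Nat.add_sub_cancel, h₀]
    have := hw hi.le
    field_simp
    push_cast at hrec ⊢
    linear_combination hrec

theorem tridiag_mulVec_krawtchoukVec {N a b : ℕ} (ha : Odd a) (hab : a + b = 2 * N) :
    (tridiag N (fun _ => (N : ℝ)) (spinOffDiag (2 * N)) *ᵥ fun j => krawtchoukVec a b j)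
      = (b : ℝ) • fun j : Fin N => krawtchoukVec a b j := by
  ext i
  have hrow := krawtchoukVec_row (a := a) (b := b) (i := i) (by omega)
  have hN : ((a : ℝ) + b) / 2 = N := by rw [← Nat.cast_add, hab]; push_cast; ring
  rw [tridiag_mulVec (spinOffDiag_zero _) (krawtchoukVec_eq_zero_of_odd ha hab), ← hab, ← hN]
  simpa using hrow

theorem offA_eq_spinOffDiag {n k : ℕ} (hk : k < n - 1) :
    offA n k = spinOffDiag (2 * (n - 1)) k := by
  rw [offA, if_neg hk.ne, spinOffDiag, Nat.cast_mul, Nat.cast_sub (by omega)]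
  push_cast
  ring_nf

theorem AmatSub_eq_tridiag (n : ℕ) :
    AmatSub n = tridiag (n - 1) (fun _ => ((n - 1 : ℕ) : ℝ)) (spinOffDiag (2 * (n - 1))) := by
  ext i j
  have hi := i.isLt
  have hj := j.isLt
  simp only [AmatSub, Amat, tridiag, tridiagEntry, submatrix_apply, of_apply, Fin.val_castLE]
  split_ifs
  · rw [Nat.cast_sub (by omega), Nat.cast_one]
  · exact offA_eq_spinOffDiag (by omega)
  · exact offA_eq_spinOffDiag (by omega)
  · rfl

theorem stmt_2_general (n : ℕ) :
    spectrum ℝ (AmatSub n) = {x : ℝ | ∃ k < n - 1, x = 2 * (k : ℝ) + 1} := by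
  rw [AmatSub_eq_tridiag]
  generalize n - 1 = N
  have hodd (k : Fin N) : Odd (2 * N - (2 * k + 1)) :=
    ⟨N - 1 - k, by have := k.isLt; omega⟩
  have heig (k : Fin N) := tridiag_mulVec_krawtchoukVec (N := N) (b := 2 * k + 1) (hodd k)
    (by have := k.isLt; omega)
  have hne (k : Fin N) :
      (fun j : Fin N => krawtchoukVec (2 * N - (2 * k + 1)) (2 * k + 1) j) ≠ 0 :=
    fun h => by simpa [krawtchoukVec_zero] using congrFun h ⟨0, k.pos⟩
  rw [spectrum_eq_range_of_injective _ (fun k : Fin N => 2 * (k : ℝ) + 1)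
    (fun k l hkl => Fin.ext (by simpa using hkl)) (fun k => ⟨_, hne k, by simpa using heig k⟩)]
  ext x
  simp [Fin.exists_iff, eq_comm]

theorem stmt_2 (n : ℕ) (hn : 2 ≤ n) :
    spectrum ℝ (AmatSub n) = {x : ℝ | ∃ k < n - 1, x = 2 * (k : ℝ) + 1} :=
  stmt_2_general n
end

section
/- Let B = A°(n+1) − nI (an n×n matrix) and A = A(n) − (n−1)I. Define the n×n upper triangular matrix R by r_{ij} = √(k·(j−1)!(2n−j−1)!/((i−1)!(2n−i+1)!)) when i and j have the same parity and j ≥ i (with k = 2 if j ≠ n and k = 1 if j = n), and r_{ij} = 0 otherwise. Then BR = RA, and R is invertible, so B and A are similar. -/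
/-- The upper triangular similarity matrix `R` (entries 1-indexed as `(i+1, j+1)`):
`r_{IJ} = √(k (J-1)! (2n-J-1)! / ((I-1)! (2n-I+1)!))` when `I, J` have the same
parity and `J ≥ I`, with `k = 2` if `J ≠ n` and `k = 1` if `J = n`; otherwise `0`. -/
noncomputable def Rmat (n : ℕ) : Matrix (Fin n) (Fin n) ℝ :=
  Matrix.of fun i j =>
    if (i : ℕ) % 2 = (j : ℕ) % 2 ∧ (i : ℕ) ≤ (j : ℕ) then
      Real.sqrt ((if (j : ℕ) + 1 = n then (1 : ℝ) else 2) *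
        (Nat.factorial (j : ℕ)) * (Nat.factorial (2 * n - (j : ℕ) - 2)) /
        ((Nat.factorial (i : ℕ)) * (Nat.factorial (2 * n - (i : ℕ)))))
    else 0

open Finset
open scoped Nat

def symTridiag (β : ℕ → ℝ) (i k : ℕ) : ℝ :=
  if k = i + 1 then β i else if i = k + 1 then β k else 0

namespace symTridiag

variable {β : ℕ → ℝ} {i k : ℕ}

lemma comm (β : ℕ → ℝ) (i k : ℕ) : symTridiag β i k = symTridiag β k i := by
  unfold symTridiag
  split_ifs <;> first | rfl | omega

lemma adjacent_of_ne_zero (h : symTridiag β i k ≠ 0) : k = i + 1 ∨ i = k + 1 := by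
  unfold symTridiag at h
  split_ifs at h <;> tauto

lemma sum_mul {n : ℕ} (hi : i < n) (f : ℕ → ℝ) :
    ∑ k ∈ range n, symTridiag β i k * f k =
      (if i + 1 < n then β i * f (i + 1) else 0) + (if 0 < i then β (i - 1) * f (i - 1) else 0) := by
  have hsplit : ∀ k, symTridiag β i k * f k =
      (if k = i + 1 then β i * f (i + 1) else 0) +
        (if k + 1 = i then β (i - 1) * f (i - 1) else 0) := by
    intro k
    unfold symTridiag
    split_ifs <;> first | omega | (subst_vars; simp)
  simp only [hsplit, sum_add_distrib, sum_ite_eq', mem_range]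
  congr 1
  rcases i with _ | i
  · simp
  · simp [Nat.add_right_cancel_iff, sum_ite_eq', (by omega : i < n)]

lemma mul_sum {n j : ℕ} (hj : j < n) (f : ℕ → ℝ) :
    ∑ k ∈ range n, f k * symTridiag β k j =
      (if j + 1 < n then f (j + 1) * β j else 0) + (if 0 < j then f (j - 1) * β (j - 1) else 0) := by
  simp only [comm β _ j, mul_comm (f _), sum_mul hj]

end symTridiag

lemma submatrix_Amat_succ_sub_smul_one (n : ℕ) :
    (Amat (n + 1)).submatrix Fin.castSucc Fin.castSucc - (n : ℝ) • (1 : Matrix (Fin n) (Fin n) ℝ) =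
      Matrix.of fun i k : Fin n => symTridiag (fun k => offA (n + 1) (k + 1)) i k := by
  ext i k
  simp only [Matrix.sub_apply, Matrix.submatrix_apply, Matrix.smul_apply, Matrix.one_apply, Amat,
    Matrix.of_apply, Fin.val_castSucc, symTridiag, smul_eq_mul, Fin.ext_iff]
  split_ifs <;> first | omega | (push_cast; ring)

lemma Amat_sub_smul_one (n : ℕ) :
    Amat n - ((n : ℝ) - 1) • (1 : Matrix (Fin n) (Fin n) ℝ) =
      Matrix.of fun k j : Fin n => symTridiag (fun k => offA n (k + 1)) k j := by
  ext k j
  simp only [Matrix.sub_apply, Matrix.smul_apply, Matrix.one_apply, Amat, Matrix.of_apply,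
    symTridiag, smul_eq_mul, Fin.ext_iff]
  split_ifs <;> first | omega | ring

lemma mul_of_apply {n : ℕ} (f g : ℕ → ℕ → ℝ) (i j : Fin n) :
    ((Matrix.of fun i k : Fin n => f i k) * Matrix.of fun k j : Fin n => g k j) i j =
      ∑ k ∈ range n, f i k * g k j :=
  Fin.sum_univ_eq_sum_range (fun k => f i k * g k j) n

lemma half_mul_of_mul_sqrt_eq {p q x y : ℝ} (hp : 0 ≤ p) (hq : 0 ≤ q) (h : y * √q = x * √p) :
    √p * √q / 2 * x = q / 2 * y ∧ √p * √q / 2 * y = p / 2 * x :=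
  ⟨by linear_combination (-√q / 2) * h + (y / 2) * Real.mul_self_sqrt hq,
    by linear_combination (√p / 2) * h + (x / 2) * Real.mul_self_sqrt hp⟩

noncomputable def rowScale (n i : ℕ) : ℝ := (√((i ! : ℝ) * (2 * n - i)!))⁻¹

noncomputable def colScale (n j : ℕ) : ℝ := √((if j + 1 = n then 1 else 2) * (j ! : ℝ) * (2 * n - j - 2)!)

-- The exceptional last entry `√(n(n-1)/2)` of `A(n)` equals `√(n-1) * √(2n) / 2`, whence `2 * n`.
noncomputable def colGap (n j : ℕ) : ℝ := if j + 2 = n then 2 * n else 2 * n - j - 2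

noncomputable def rEntry (n i j : ℕ) : ℝ :=
  if i % 2 = j % 2 ∧ i ≤ j then rowScale n i * colScale n j else 0

lemma Rmat_eq (n : ℕ) : Rmat n = Matrix.of fun i j : Fin n => rEntry n i j := by
  ext i j
  simp only [Rmat, Matrix.of_apply, rEntry, rowScale, colScale]
  congr 1
  rw [Real.sqrt_div' _ (by positivity), div_eq_inv_mul]

section

variable {n i j : ℕ}

lemma offA_succ_succ (hi : i + 1 < n) :
    offA (n + 1) (i + 1) = √((i : ℝ) + 1) * √(2 * n - i) / 2 := by
  rw [offA, if_neg (by omega), ← Real.sqrt_mul (by positivity)]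
  push_cast
  ring_nf

lemma offA_succ (hj : j + 1 < n) : offA n (j + 1) = √((j : ℝ) + 1) * √(colGap n j) / 2 := by
  rw [colGap, ← Real.sqrt_mul (by positivity)]
  split_ifs with hn
  · subst hn
    rw [offA, if_pos (by omega), Real.sqrt_eq_iff_mul_self_eq_of_pos (by positivity),
      div_mul_div_comm, Real.mul_self_sqrt (by positivity)]
    push_cast
    ring
  · rw [offA, if_neg (by omega)]
    push_cast
    ring_nf

lemma rowScale_mul_sqrt (hi : i < n) :
    rowScale n i * √(2 * n - i) = rowScale n (i + 1) * √((i : ℝ) + 1) := by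
  have hfac : (2 * n - i)! = (2 * n - i) * (2 * n - (i + 1))! := by
    rw [show 2 * n - i = 2 * n - (i + 1) + 1 by omega, Nat.factorial_succ]
  simp only [rowScale, ← Real.sqrt_inv]
  rw [← Real.sqrt_mul (by positivity), ← Real.sqrt_mul (by positivity), hfac, Nat.factorial_succ]
  congr 1
  have hq : (2 * n - i : ℝ) ≠ 0 := by
    rw [sub_ne_zero]; exact_mod_cast (by omega : 2 * n ≠ i)
  push_cast [Nat.cast_sub (by omega : i ≤ 2 * n)]
  field_simp

lemma colScale_mul_sqrt (hj : j + 1 < n) :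
    colScale n (j + 1) * √(colGap n j) = colScale n j * √((j : ℝ) + 1) := by
  simp only [colScale, colGap]
  rw [← Real.sqrt_mul (by positivity), ← Real.sqrt_mul (by positivity)]
  congr 1
  rw [if_neg (by omega : j + 1 ≠ n), Nat.factorial_succ j]
  split_ifs with hn
  · subst hn
    rw [show 2 * (j + 2) - (j + 1) - 2 = j + 1 by omega, show 2 * (j + 2) - j - 2 = j + 2 by omega,
      Nat.factorial_succ (j + 1), Nat.factorial_succ j]
    push_cast
    ring
  · have hfac : (2 * n - j - 2)! = (2 * n - (j + 2)) * (2 * n - (j + 1) - 2)! := by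
      rw [show 2 * n - j - 2 = 2 * n - (j + 1) - 2 + 1 by omega, Nat.factorial_succ,
        show 2 * n - (j + 1) - 2 + 1 = 2 * n - (j + 2) by omega]
    rw [hfac]
    push_cast [Nat.cast_sub (by omega : j + 2 ≤ 2 * n)]
    ring

lemma offA_mul_rowScale (hi : i + 1 < n) :
    offA (n + 1) (i + 1) * rowScale n (i + 1) = (2 * n - i) / 2 * rowScale n i ∧
      offA (n + 1) (i + 1) * rowScale n i = ((i : ℝ) + 1) / 2 * rowScale n (i + 1) := by
  have hq : (0 : ℝ) ≤ 2 * n - i := by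
    rw [sub_nonneg]; exact_mod_cast (by omega : i ≤ 2 * n)
  rw [offA_succ_succ hi]
  exact half_mul_of_mul_sqrt_eq (by positivity) hq (rowScale_mul_sqrt (by omega))

lemma offA_mul_colScale (hj : j + 1 < n) :
    offA n (j + 1) * colScale n j = colGap n j / 2 * colScale n (j + 1) ∧
      offA n (j + 1) * colScale n (j + 1) = ((j : ℝ) + 1) / 2 * colScale n j := by
  have hq : 0 ≤ colGap n j := by
    rw [colGap]
    split_ifs
    · positivity
    · rw [sub_sub, sub_nonneg]; exact_mod_cast (by omega : j + 2 ≤ 2 * n)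
  rw [offA_succ hj]
  exact half_mul_of_mul_sqrt_eq (by positivity) hq (colScale_mul_sqrt hj)

lemma rEntry_of_le (hpar : i % 2 = j % 2) (hij : i ≤ j) :
    rEntry n i j = rowScale n i * colScale n j :=
  if_pos ⟨hpar, hij⟩

lemma parity_le_of_rEntry_ne_zero (h : rEntry n i j ≠ 0) : i % 2 = j % 2 ∧ i ≤ j := by
  by_contra hc
  exact h (if_neg hc)

lemma rEntry_of_lt (h : j < i) : rEntry n i j = 0 :=
  if_neg (by omega)

lemma sum_offA_mul_rEntry_of_lt (hij : i < j) (hpar : i % 2 ≠ j % 2) (hj : j < n) :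
    ∑ k ∈ range n, symTridiag (fun k => offA (n + 1) (k + 1)) i k * rEntry n k j =
      n * (rowScale n i * colScale n j) := by
  rw [symTridiag.sum_mul (hij.trans hj), if_pos (by omega), rEntry_of_le (by omega) (by omega)]
  obtain ⟨hup, -⟩ := offA_mul_rowScale (n := n) (i := i) (by omega)
  rcases i with _ | i
  · simp only [lt_self_iff_false, if_false, add_zero]
    push_cast at hup
    linear_combination colScale n j * hup
  · obtain ⟨-, hdown⟩ := offA_mul_rowScale (n := n) (i := i) (by omega)
    rw [if_pos (by omega), Nat.add_sub_cancel, rEntry_of_le (by omega) (by omega)]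
    push_cast at hup
    linear_combination colScale n j * (hup + hdown)

lemma sum_rEntry_mul_offA_of_lt (hij : i < j) (hpar : i % 2 ≠ j % 2) (hj : j < n) :
    ∑ k ∈ range n, rEntry n i k * symTridiag (fun k => offA n (k + 1)) k j =
      n * (rowScale n i * colScale n j) := by
  obtain ⟨j, rfl⟩ : ∃ j', j = j' + 1 := ⟨j - 1, by omega⟩
  obtain ⟨hdown, -⟩ := offA_mul_colScale (n := n) (j := j) hj
  rw [symTridiag.mul_sum hj, if_pos (Nat.succ_pos j), Nat.add_sub_cancel,
    rEntry_of_le (j := j) (by omega) (by omega)]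
  split_ifs with hjn
  · obtain ⟨-, hup⟩ := offA_mul_colScale (n := n) (j := j + 1) hjn
    rw [rEntry_of_le (by omega) (by omega)]
    rw [colGap, if_neg (by omega)] at hdown
    push_cast at hup
    linear_combination rowScale n i * (hup + hdown)
  · rw [colGap, if_pos (by omega)] at hdown
    linear_combination rowScale n i * hdown

lemma sum_offA_mul_rEntry_succ (hj : j + 1 < n) :
    ∑ k ∈ range n, symTridiag (fun k => offA (n + 1) (k + 1)) (j + 1) k * rEntry n k j =
      ((j : ℝ) + 1) / 2 * (rowScale n (j + 1) * colScale n j) := by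
  rw [symTridiag.sum_mul hj, if_pos (Nat.succ_pos j), Nat.add_sub_cancel,
    rEntry_of_lt (by omega : j < j + 1 + 1), rEntry_of_le rfl le_rfl]
  simp only [mul_zero, ite_self, zero_add]
  linear_combination colScale n j * (offA_mul_rowScale hj).2

lemma sum_rEntry_mul_offA_succ (hj : j + 1 < n) :
    ∑ k ∈ range n, rEntry n (j + 1) k * symTridiag (fun k => offA n (k + 1)) k j =
      ((j : ℝ) + 1) / 2 * (rowScale n (j + 1) * colScale n j) := by
  rw [symTridiag.mul_sum (by omega : j < n), if_pos hj, rEntry_of_le rfl le_rfl,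
    rEntry_of_lt (by omega : j - 1 < j + 1)]
  simp only [zero_mul, ite_self, add_zero]
  linear_combination rowScale n (j + 1) * (offA_mul_colScale hj).2

lemma sum_offA_mul_rEntry_eq (hi : i < n) (hj : j < n) :
    ∑ k ∈ range n, symTridiag (fun k => offA (n + 1) (k + 1)) i k * rEntry n k j =
      ∑ k ∈ range n, rEntry n i k * symTridiag (fun k => offA n (k + 1)) k j := by
  by_cases hlt : i < j ∧ i % 2 ≠ j % 2
  · rw [sum_offA_mul_rEntry_of_lt hlt.1 hlt.2 hj, sum_rEntry_mul_offA_of_lt hlt.1 hlt.2 hj]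
  by_cases hsucc : i = j + 1
  · subst hsucc
    rw [sum_offA_mul_rEntry_succ hi, sum_rEntry_mul_offA_succ hi]
  rw [sum_eq_zero, sum_eq_zero]
  · intro k _
    by_contra hk
    obtain ⟨hr, hb⟩ := mul_ne_zero_iff.mp hk
    have := parity_le_of_rEntry_ne_zero hr
    have := symTridiag.adjacent_of_ne_zero hb
    omega
  · intro k _
    by_contra hk
    obtain ⟨hb, hr⟩ := mul_ne_zero_iff.mp hk
    have := parity_le_of_rEntry_ne_zero hr
    have := symTridiag.adjacent_of_ne_zero hb
    omega

end

lemma rowScale_pos (n i : ℕ) : 0 < rowScale n i := by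
  unfold rowScale
  positivity

lemma colScale_pos (n j : ℕ) : 0 < colScale n j := by
  unfold colScale
  split_ifs <;> positivity

lemma isUpperTriangular_Rmat (n : ℕ) : (Rmat n).IsUpperTriangular := fun i j hij => by
  rw [Rmat_eq, Matrix.of_apply]
  exact rEntry_of_lt hij

lemma isUnit_Rmat (n : ℕ) : IsUnit (Rmat n) := by
  rw [Matrix.isUnit_iff_isUnit_det, Matrix.det_of_isUpperTriangular (isUpperTriangular_Rmat n),
    isUnit_iff_ne_zero]
  refine (prod_pos fun i _ => ?_).ne'
  rw [Rmat_eq, Matrix.of_apply, rEntry_of_le rfl le_rfl]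
  exact mul_pos (rowScale_pos n i) (colScale_pos n i)

theorem stmt_3_general (n : ℕ) :
    ((Amat (n + 1)).submatrix Fin.castSucc Fin.castSucc - (n : ℝ) • (1 : Matrix (Fin n) (Fin n) ℝ)) * Rmat n
        = Rmat n * (Amat n - ((n : ℝ) - 1) • (1 : Matrix (Fin n) (Fin n) ℝ)) ∧
      IsUnit (Rmat n) := by
  refine ⟨?_, isUnit_Rmat n⟩
  ext i j
  rw [submatrix_Amat_succ_sub_smul_one, Amat_sub_smul_one, Rmat_eq, mul_of_apply, mul_of_apply]
  exact sum_offA_mul_rEntry_eq i.isLt j.isLt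

theorem stmt_3 (n : ℕ) (hn : 2 ≤ n) :
    ((Amat (n + 1)).submatrix Fin.castSucc Fin.castSucc - (n : ℝ) • (1 : Matrix (Fin n) (Fin n) ℝ)) * Rmat n
        = Rmat n * (Amat n - ((n : ℝ) - 1) • (1 : Matrix (Fin n) (Fin n) ℝ)) ∧
      IsUnit (Rmat n) :=
  stmt_3_general n
end

section
/- Let C = A(n+1) − 2nI. Then C = −LLᵀ where L is the (n+1)×(n+1) lower bidiagonal matrix with l_{ii} = √((2n−i+1)/2) for i=1,…,n−1, l_{i+1,i} = −√(i/2) for i=1,…,n−1, l_{nn} = √((n+1)/2), l_{n+1,n} = −√n, and l_{n+1,n+1} = 0. -/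
/-- The lower bidiagonal matrix `L` of size `(n+1) × (n+1)` (entries 1-indexed as `I = i+1`):
`l_{II} = √((2n-I+1)/2)` for `I ≤ n-1`, `l_{nn} = √((n+1)/2)`, `l_{n+1,n+1} = 0`,
`l_{I+1,I} = -√(I/2)` for `I ≤ n-1`, `l_{n+1,n} = -√n`. -/
noncomputable def Lmat (n : ℕ) : Matrix (Fin (n + 1)) (Fin (n + 1)) ℝ :=
  Matrix.of fun i j =>
    if (i : ℕ) = (j : ℕ) then
      (if (i : ℕ) + 1 < n then Real.sqrt ((2 * n - i) / 2)
       else if (i : ℕ) + 1 = n then Real.sqrt ((n + 1) / 2)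
       else 0)
    else if (j : ℕ) + 1 = (i : ℕ) then
      (if (j : ℕ) + 1 < n then -Real.sqrt ((j + 1) / 2)
       else -Real.sqrt n)
    else 0

/-!
Both sides are symmetric tridiagonal: for a lower bidiagonal matrix `L` with diagonal `d` and
subdiagonal `s`, the product `L Lᵀ` has diagonal entries `d_k² + s_{k-1}²` and off-diagonal
entries `d_k s_k`. The identity thus reduces to the scalar identities `d_k² + s_{k-1}² = n` and
`d_k s_k = -a_{k,k+1}`, which are checked by squaring out the square roots.
-/

namespace Matrix

variable {R : Type*} {m : ℕ}

def symmTridiagonal [Zero R] (a b : ℕ → R) : Matrix (Fin m) (Fin m) R :=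
  of fun i j =>
    if (i : ℕ) = (j : ℕ) then a i
    else if (i : ℕ) + 1 = (j : ℕ) then b i
    else if (j : ℕ) + 1 = (i : ℕ) then b j
    else 0

def lowerBidiagonal [Zero R] (d s : ℕ → R) : Matrix (Fin m) (Fin m) R :=
  of fun i j =>
    if (i : ℕ) = (j : ℕ) then d i
    else if (j : ℕ) + 1 = (i : ℕ) then s j
    else 0

theorem symmTridiagonal_congr [Zero R] {a a' b b' : ℕ → R} (ha : ∀ k < m, a k = a' k)
    (hb : ∀ k, k + 1 < m → b k = b' k) :
    (symmTridiagonal a b : Matrix (Fin m) (Fin m) R) = symmTridiagonal a' b' := by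
  ext ⟨i, hi⟩ ⟨j, hj⟩
  simp only [symmTridiagonal, of_apply]
  split_ifs <;> grind

theorem neg_symmTridiagonal [AddGroup R] (a b : ℕ → R) :
    -(symmTridiagonal a b : Matrix (Fin m) (Fin m) R) = symmTridiagonal (-a) (-b) := by
  ext i j
  simp only [symmTridiagonal, neg_apply, of_apply, Pi.neg_apply]
  split_ifs <;> simp

theorem symmTridiagonal_sub_smul_one [Ring R] (a b : ℕ → R) (c : R) :
    (symmTridiagonal a b : Matrix (Fin m) (Fin m) R) - c • 1 =
      symmTridiagonal (fun k => a k - c) b := by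
  ext i j
  simp only [symmTridiagonal, sub_apply, smul_apply, one_apply, of_apply, Fin.ext_iff]
  split_ifs <;> simp

theorem lowerBidiagonal_mul_transpose [CommRing R] (d s : ℕ → R) :
    (lowerBidiagonal d s * (lowerBidiagonal d s)ᵀ : Matrix (Fin m) (Fin m) R) =
      symmTridiagonal (fun k => d k * d k + if k = 0 then 0 else s (k - 1) * s (k - 1))
        (fun k => d k * s k) := by
  ext ⟨i, hi⟩ ⟨j, hj⟩
  let row : ℕ → ℕ → R := fun i b => if i = b then d i else if b + 1 = i then s b else 0
  simp only [mul_apply, lowerBidiagonal, symmTridiagonal, transpose_apply, of_apply]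
  rw [Fin.sum_univ_eq_sum_range (fun b => row i b * row j b)]
  -- row `i` is supported on the columns `i - 1` and `i`
  cases i with
  | zero =>
    rw [Finset.sum_eq_single 0 ?_ (by simp; omega)]
    · simp only [row]; grind
    · intro b _ hb; simp only [row]; grind
  | succ k =>
    rw [Finset.sum_eq_add k (k + 1) (by omega) ?_ (by simp; omega) (by simp; omega)]
    · simp only [row]; grind
    · intro b _ hb; simp only [row]; grind

end Matrix

open Matrix

noncomputable def Ldiag (n k : ℕ) : ℝ :=
  if k + 1 < n then Real.sqrt ((2 * n - k) / 2)
  else if k + 1 = n then Real.sqrt ((n + 1) / 2) else 0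

noncomputable def Lsub (n k : ℕ) : ℝ :=
  if k + 1 < n then -Real.sqrt ((k + 1) / 2) else -Real.sqrt n

theorem Lmat_eq_lowerBidiagonal (n : ℕ) : Lmat n = lowerBidiagonal (Ldiag n) (Lsub n) := rfl

theorem Amat_eq_symmTridiagonal (n : ℕ) :
    Amat n = symmTridiagonal (fun _ => (n : ℝ) - 1) (fun k => offA n (k + 1)) := rfl

theorem Ldiag_mul_self (n k : ℕ) :
    Ldiag n k * Ldiag n k =
      if k + 1 < n then (2 * (n : ℝ) - k) / 2 else if k + 1 = n then ((n : ℝ) + 1) / 2 else 0 := by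
  have hk : k + 1 < n → (k : ℝ) + 1 < n := fun h => by exact_mod_cast h
  unfold Ldiag
  split_ifs with h₁ h₂
  · exact Real.mul_self_sqrt (by linarith [hk h₁])
  · exact Real.mul_self_sqrt (by positivity)
  · exact mul_zero _

theorem Lsub_mul_self (n k : ℕ) :
    Lsub n k * Lsub n k = if k + 1 < n then ((k : ℝ) + 1) / 2 else (n : ℝ) := by
  unfold Lsub
  split_ifs <;> rw [neg_mul_neg, Real.mul_self_sqrt (by positivity)]

theorem Ldiag_mul_self_add_Lsub_mul_self {n k : ℕ} (hk : k ≤ n) :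
    Ldiag n k * Ldiag n k + (if k = 0 then 0 else Lsub n (k - 1) * Lsub n (k - 1)) = n := by
  rw [Ldiag_mul_self, Lsub_mul_self]
  obtain h | rfl | rfl : k + 1 < n ∨ k + 1 = n ∨ k = n := by omega
  · rcases k with _ | k
    · simp [h]
    · simp only [h, (by omega : k + 1 < n), ↓reduceIte, Nat.add_one_ne_zero,
        add_tsub_cancel_right, Nat.cast_add, Nat.cast_one]
      ring
  · rcases k with _ | k
    · simp
    · simp only [lt_self_iff_false, (by omega : k + 1 < k + 1 + 1), ↓reduceIte,
        Nat.add_one_ne_zero, add_tsub_cancel_right, Nat.cast_add, Nat.cast_one]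
      ring
  · rcases k with _ | k <;> simp

theorem Ldiag_mul_Lsub {n k : ℕ} (hk : k < n) :
    Ldiag n k * Lsub n k = -offA (n + 1) (k + 1) := by
  obtain h | rfl : k + 1 < n ∨ k + 1 = n := by omega
  · have h' : (k : ℝ) + 1 < n := by exact_mod_cast h
    rw [Ldiag, Lsub, offA, if_pos h, if_pos h, if_neg (by omega), mul_neg,
      ← Real.sqrt_mul (by linarith)]
    rw [show (2 * (n : ℝ) - k) / 2 * ((k + 1) / 2) = (1 / 2) ^ 2 * (((k + 1 : ℕ) : ℝ) *
      (2 * ((n + 1 : ℕ) : ℝ) - ((k + 1 : ℕ) : ℝ) - 1)) by push_cast; ring,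
      Real.sqrt_mul (by norm_num), Real.sqrt_sq (by norm_num)]
  · rw [Ldiag, Lsub, offA, if_neg (by omega), if_pos rfl, if_neg (by omega), if_pos (by omega),
      mul_neg, ← Real.sqrt_mul (by positivity)]
    congr 2
    push_cast
    ring

theorem stmt_4_general (n : ℕ) :
    Amat (n + 1) - (2 * (n : ℝ)) • (1 : Matrix (Fin (n + 1)) (Fin (n + 1)) ℝ)
      = -(Lmat n * (Lmat n).transpose) := by
  rw [Amat_eq_symmTridiagonal, Lmat_eq_lowerBidiagonal, lowerBidiagonal_mul_transpose,
    symmTridiagonal_sub_smul_one, neg_symmTridiagonal]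
  refine symmTridiagonal_congr (fun k hk => ?_) (fun k hk => ?_)
  · rw [Pi.neg_apply, Ldiag_mul_self_add_Lsub_mul_self (by omega)]
    push_cast
    ring
  · rw [Pi.neg_apply, Ldiag_mul_Lsub (by omega), neg_neg]

theorem stmt_4 (n : ℕ) (hn : 1 ≤ n) :
    Amat (n + 1) - (2 * (n : ℝ)) • (1 : Matrix (Fin (n + 1)) (Fin (n + 1)) ℝ)
      = -(Lmat n * (Lmat n).transpose) :=
  stmt_4_general n
end

section
/- With the bidiagonal matrix L from the factorization A(n+1) − 2nI = −LLᵀ, the matrix D = 2nI − LᵀL is block diagonal of the form [[D°, 0],[0, 2n]], where D° is the n×n symmetric tridiagonal matrix with diagonal entries d_{ii} = (2n−1)/2 for i=1,…,n−1, d_{nn} = (n−1)/2, and off-diagonal entries d_{i+1,i} = d_{i,i+1} = (1/2)√(i(2n−i)) for i=1,…,n−1. -/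
/-- The block-diagonal matrix `[[D°, 0], [0, 2n]]`, where `D°` is the `n × n`
symmetric tridiagonal matrix with diagonal `(2n-1)/2` (except `(n-1)/2` in the
last position) and off-diagonal `(1/2)√(k(2n-k))` at (1-indexed) position `(k, k+1)`. -/
noncomputable def Dfull (n : ℕ) : Matrix (Fin (n + 1)) (Fin (n + 1)) ℝ :=
  Matrix.of fun i j =>
    if (i : ℕ) = (j : ℕ) then
      (if (i : ℕ) + 1 < n then (2 * (n : ℝ) - 1) / 2
       else if (i : ℕ) + 1 = n then ((n : ℝ) - 1) / 2
       else 2 * (n : ℝ))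
    else if (i : ℕ) + 1 = (j : ℕ) ∧ (j : ℕ) < n then
      (1 / 2) * Real.sqrt ((i + 1) * (2 * n - i - 1))
    else if (j : ℕ) + 1 = (i : ℕ) ∧ (i : ℕ) < n then
      (1 / 2) * Real.sqrt ((j + 1) * (2 * n - j - 1))
    else 0

/-! Column `k` of the lower bidiagonal `L` is supported on rows `k` and `k + 1`, so `LᵀL` is
tridiagonal, with diagonal `l_kk² + l_{k+1,k}²` and off-diagonal `l_{k+1,k} l_{k+1,k+1}`; the
square roots then combine into those of `D°`. The last column of `L` is zero, which splits off
the block `2n`. -/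

open scoped Matrix

def lowerBidiagonal {R : Type*} [Zero R] (m : ℕ) (d e : ℕ → R) : Matrix (Fin m) (Fin m) R :=
  Matrix.of fun i j =>
    if (i : ℕ) = (j : ℕ) then d i else if (j : ℕ) + 1 = (i : ℕ) then e j else 0

theorem transpose_mul_self_lowerBidiagonal_apply {R : Type*} [CommRing R] (m : ℕ)
    (d e : ℕ → R) (i j : Fin m) :
    ((lowerBidiagonal m d e)ᵀ * lowerBidiagonal m d e) i j =
      if (i : ℕ) = (j : ℕ) then d i ^ 2 + (if (i : ℕ) + 1 < m then e i ^ 2 else 0)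
      else if (i : ℕ) + 1 = (j : ℕ) then e i * d j
      else if (j : ℕ) + 1 = (i : ℕ) then d i * e j
      else 0 := by
  obtain ⟨i, hi⟩ := i
  obtain ⟨j, hj⟩ := j
  set b : ℕ → ℕ → R := fun k l => if k = l then d k else if l + 1 = k then e l else 0
  have hsum : ((lowerBidiagonal m d e)ᵀ * lowerBidiagonal m d e) ⟨i, hi⟩ ⟨j, hj⟩ =
      ∑ k ∈ Finset.range m, b k i * b k j := by
    rw [Matrix.mul_apply, ← Fin.sum_univ_eq_sum_range (fun k => b k i * b k j) m]
    rfl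
  have hzero : ∀ k, k ≠ i → k ≠ i + 1 → b k i * b k j = 0 := by
    intro k hki hki'
    simp only [b]
    split_ifs <;> first | omega | ring
  rw [hsum]
  rcases lt_or_ge (i + 1) m with hlt | hge
  · rw [Finset.sum_eq_add_of_mem i (i + 1) (Finset.mem_range.2 hi) (Finset.mem_range.2 hlt)
      (by omega) (fun k _ hk => hzero k hk.1 hk.2)]
    simp only [b]
    split_ifs <;> first | omega | subst_vars; ring
  · rw [Finset.sum_eq_single_of_mem i (Finset.mem_range.2 hi)
      (fun k hk hki => hzero k hki (by have := Finset.mem_range.1 hk; omega))]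
    simp only [b]
    split_ifs <;> first | omega | subst_vars; ring

noncomputable def lmatDiag (n k : ℕ) : ℝ :=
  if k + 1 < n then √((2 * n - k) / 2) else if k + 1 = n then √((n + 1) / 2) else 0

noncomputable def lmatSubdiag (n k : ℕ) : ℝ :=
  if k + 1 < n then -√((k + 1) / 2) else -√n

theorem Lmat_eq_lowerBidiagonal_s5 (n : ℕ) :
    Lmat n = lowerBidiagonal (n + 1) (lmatDiag n) (lmatSubdiag n) :=
  rfl

section lmat

variable {n k : ℕ}

theorem lmatDiag_of_lt (hk : k < n) : lmatDiag n k = √((2 * n - k) / 2) := by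
  unfold lmatDiag
  split_ifs with _ heq
  · rfl
  · congr 1
    rw [← heq]
    push_cast
    ring
  · omega

theorem lmatDiag_self (n : ℕ) : lmatDiag n n = 0 := by
  simp [lmatDiag]

theorem lmatDiag_sq_of_lt (hk : k < n) : lmatDiag n k ^ 2 = (2 * n - k) / 2 := by
  have hk' : (k : ℝ) < n := by exact_mod_cast hk
  rw [lmatDiag_of_lt hk, Real.sq_sqrt (by linarith)]

theorem lmatSubdiag_sq (n k : ℕ) :
    lmatSubdiag n k ^ 2 = if k + 1 < n then ((k : ℝ) + 1) / 2 else n := by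
  unfold lmatSubdiag
  split_ifs <;> rw [neg_sq, Real.sq_sqrt (by positivity)]

theorem lmatSubdiag_mul_lmatDiag_succ (hk : k + 1 < n) :
    lmatSubdiag n k * lmatDiag n (k + 1) = -(1 / 2 * √((k + 1) * (2 * n - k - 1))) := by
  have hk' : (k : ℝ) + 1 < n := by exact_mod_cast hk
  rw [lmatSubdiag, if_pos hk, lmatDiag_of_lt hk, neg_mul, ← Real.sqrt_mul (by positivity),
    show ((k : ℝ) + 1) / 2 * ((2 * n - (k + 1 : ℕ)) / 2) = (k + 1) * (2 * n - k - 1) / 2 ^ 2 by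
      push_cast; ring,
    Real.sqrt_div' _ (by positivity), Real.sqrt_sq (by norm_num)]
  ring

end lmat

theorem stmt_5_general (n : ℕ) :
    (2 * (n : ℝ)) • (1 : Matrix (Fin (n + 1)) (Fin (n + 1)) ℝ)
        - (Lmat n).transpose * Lmat n = Dfull n := by
  ext ⟨i, hi⟩ ⟨j, hj⟩
  rw [Matrix.sub_apply, Lmat_eq_lowerBidiagonal_s5, transpose_mul_self_lowerBidiagonal_apply]
  simp only [Dfull, Matrix.smul_apply, Matrix.one_apply, Fin.ext_iff, Matrix.of_apply, smul_eq_mul]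
  split_ifs <;> try omega
  · rw [lmatDiag_sq_of_lt (by omega), lmatSubdiag_sq, if_pos ‹_›]
    ring
  · have hi' : (i : ℝ) + 1 = n := by exact_mod_cast ‹i + 1 = n›
    rw [lmatDiag_sq_of_lt (by omega), lmatSubdiag_sq, if_neg (by omega)]
    linear_combination (1 / 2 : ℝ) * hi'
  · obtain rfl : i = n := by omega
    rw [lmatDiag_self]
    ring
  · subst j
    rw [lmatSubdiag_mul_lmatDiag_succ (by omega)]
    ring
  · obtain rfl : j = n := by omega
    rw [lmatDiag_self]
    ring
  · subst i
    rw [mul_comm (lmatDiag n _), lmatSubdiag_mul_lmatDiag_succ (by omega)]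
    ring
  · obtain rfl : i = n := by omega
    rw [lmatDiag_self]
    ring
  · ring

theorem stmt_5 (n : ℕ) (hn : 1 ≤ n) :
    (2 * (n : ℝ)) • (1 : Matrix (Fin (n + 1)) (Fin (n + 1)) ℝ)
        - (Lmat n).transpose * Lmat n = Dfull n :=
  stmt_5_general n
end

section
/- The n×n matrix D° (with diagonal entries (2n−1)/2 for i<n and (n−1)/2 for i=n, and off-diagonals (1/2)√(i(2n−i))) is similar to A(n) via S·D° = A(n)·S, where S is the upper bidiagonal matrix with s_{ii} = √(2n−i) for i=1,…,n−1, s_{nn} = √(2n), s_{i,i+1} = −√i for i=1,…,n−1, and all other entries zero; moreover S is invertible. -/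
/-- The `n × n` symmetric tridiagonal matrix `D°` with diagonal `(2n-1)/2`
(except `(n-1)/2` in the last position) and off-diagonal `(1/2)√(k(2n-k))`
at (1-indexed) position `(k, k+1)`. -/
noncomputable def Dsub (n : ℕ) : Matrix (Fin n) (Fin n) ℝ :=
  Matrix.of fun i j =>
    if (i : ℕ) = (j : ℕ) then
      (if (i : ℕ) + 1 < n then (2 * (n : ℝ) - 1) / 2 else ((n : ℝ) - 1) / 2)
    else if (i : ℕ) + 1 = (j : ℕ) then (1 / 2) * Real.sqrt ((i + 1) * (2 * n - i - 1))
    else if (j : ℕ) + 1 = (i : ℕ) then (1 / 2) * Real.sqrt ((j + 1) * (2 * n - j - 1))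
    else 0

/-- The upper bidiagonal matrix `S` (1-indexed): `s_{II} = √(2n-I)` for `I ≤ n-1`,
`s_{nn} = √(2n)`, `s_{I,I+1} = -√I` for `I ≤ n-1`, all other entries zero. -/
noncomputable def Smat (n : ℕ) : Matrix (Fin n) (Fin n) ℝ :=
  Matrix.of fun i j =>
    if (i : ℕ) = (j : ℕ) then
      (if (i : ℕ) + 1 < n then Real.sqrt (2 * n - i - 1) else Real.sqrt (2 * n))
    else if (i : ℕ) + 1 = (j : ℕ) then -Real.sqrt (i + 1)
    else 0

/-
All three matrices are banded: `S` is upper bidiagonal, `D°` and `A(n)` are tridiagonal. Hence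
both products vanish outside the band `i - 1 ≤ j ≤ i + 2`, and each of their entries inside it
is a sum of at most two products. Comparing the four bands is a computation with square roots;
on the diagonal both sides equal `(n - 1 - i/2) s_ii` (with `i` counted from `0`). Finally, `S`
is upper triangular with positive diagonal, hence invertible.
-/

namespace Matrix

variable {R : Type*} [NonUnitalNonAssocSemiring R] {n : ℕ}

def IsBanded (M : Matrix (Fin n) (Fin n) R) (p q : ℕ) : Prop :=
  ∀ i j : Fin n, (j : ℕ) + p < i ∨ (i : ℕ) + q < j → M i j = 0

variable {X Y : Matrix (Fin n) (Fin n) R} {p q p' q' : ℕ}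

theorem IsBanded.mul_apply_eq_sum (hX : X.IsBanded p q) (hY : Y.IsBanded p' q') {i j : Fin n}
    (s : Finset (Fin n))
    (hs : ∀ k : Fin n, (i : ℕ) ≤ k + p → (k : ℕ) ≤ i + q → (j : ℕ) ≤ k + q' → (k : ℕ) ≤ j + p' →
      k ∈ s) :
    (X * Y) i j = ∑ k ∈ s, X i k * Y k j := by
  rw [mul_apply]
  refine (Finset.sum_subset (Finset.subset_univ s) fun k _ hk => ?_).symm
  by_cases hXk : (i : ℕ) ≤ k + p ∧ (k : ℕ) ≤ i + q
  · rw [hY k j (by by_contra! h; exact hk (hs k hXk.1 hXk.2 (by omega) (by omega))), mul_zero]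
  · rw [hX i k (by omega), zero_mul]

theorem IsBanded.mul_apply_eq_single (hX : X.IsBanded p q) (hY : Y.IsBanded p' q')
    {i j : Fin n} (k₀ : Fin n)
    (h : ∀ k : Fin n, (i : ℕ) ≤ k + p → (k : ℕ) ≤ i + q → (j : ℕ) ≤ k + q' → (k : ℕ) ≤ j + p' →
      (k : ℕ) = k₀) :
    (X * Y) i j = X i k₀ * Y k₀ j := by
  rw [hX.mul_apply_eq_sum hY {k₀} fun k h₁ h₂ h₃ h₄ => by simp [Fin.ext (h k h₁ h₂ h₃ h₄)],
    Finset.sum_singleton]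

theorem IsBanded.mul_apply_eq_add (hX : X.IsBanded p q) (hY : Y.IsBanded p' q')
    {i j : Fin n} (k₀ k₁ : Fin n) (hk : (k₀ : ℕ) ≠ k₁)
    (h : ∀ k : Fin n, (i : ℕ) ≤ k + p → (k : ℕ) ≤ i + q → (j : ℕ) ≤ k + q' → (k : ℕ) ≤ j + p' →
      (k : ℕ) = k₀ ∨ (k : ℕ) = k₁) :
    (X * Y) i j = X i k₀ * Y k₀ j + X i k₁ * Y k₁ j := by
  rw [hX.mul_apply_eq_sum hY {k₀, k₁} fun k h₁ h₂ h₃ h₄ => by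
      rcases h k h₁ h₂ h₃ h₄ with h | h <;> simp [Fin.ext h],
    Finset.sum_pair (Fin.ne_of_val_ne hk)]

theorem IsBanded.mul (hX : X.IsBanded p q) (hY : Y.IsBanded p' q') :
    (X * Y).IsBanded (p + p') (q + q') := fun i j hij => by
  rw [hX.mul_apply_eq_sum hY ∅ fun k _ _ _ _ => by omega, Finset.sum_empty]

end Matrix

open Matrix

variable {n : ℕ} {i j : Fin n}

theorem isBanded_Smat : (Smat n).IsBanded 0 1 := fun i j h => by
  simp only [Smat, of_apply]
  rw [if_neg (by omega), if_neg (by omega)]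

theorem isBanded_Dsub : (Dsub n).IsBanded 1 1 := fun i j h => by
  simp only [Dsub, of_apply]
  rw [if_neg (by omega), if_neg (by omega), if_neg (by omega)]

theorem isBanded_Amat : (Amat n).IsBanded 1 1 := fun i j h => by
  simp only [Amat, of_apply]
  rw [if_neg (by omega), if_neg (by omega), if_neg (by omega)]

theorem Smat_apply_self_of_lt (h : (i : ℕ) + 1 < n) : Smat n i i = √(2 * n - i - 1) := by
  simp [Smat, h]

theorem Smat_apply_self_of_eq (h : (i : ℕ) + 1 = n) : Smat n i i = √(2 * n) := by
  simp [Smat, h]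

theorem Smat_apply_of_eq_succ (h : (j : ℕ) = i + 1) : Smat n i j = -√(i + 1) := by
  simp [Smat, h]

theorem Dsub_apply_self_of_lt (h : (i : ℕ) + 1 < n) : Dsub n i i = (2 * n - 1) / 2 := by
  simp [Dsub, h]

theorem Dsub_apply_self_of_eq (h : (i : ℕ) + 1 = n) : Dsub n i i = (n - 1) / 2 := by
  simp [Dsub, h]

theorem Dsub_apply_of_eq_succ (h : (j : ℕ) = i + 1) :
    Dsub n i j = √(i + 1) * √(2 * n - i - 1) / 2 := by
  simp [Dsub, h, Real.sqrt_mul (by positivity : (0 : ℝ) ≤ i + 1)]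
  ring

theorem Dsub_apply_of_succ_eq (h : (i : ℕ) = j + 1) :
    Dsub n i j = √(j + 1) * √(2 * n - j - 1) / 2 := by
  simp [Dsub, h, show (j : ℕ) + 1 + 1 ≠ j by omega,
    Real.sqrt_mul (by positivity : (0 : ℝ) ≤ j + 1)]
  ring

theorem Amat_apply_self (i : Fin n) : Amat n i i = n - 1 := by
  simp [Amat]

theorem Amat_apply_of_eq_succ (h : (j : ℕ) = i + 1) : Amat n i j = offA n j := by
  simp [Amat, h]

theorem Amat_apply_of_succ_eq (h : (i : ℕ) = j + 1) : Amat n i j = offA n i := by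
  simp [Amat, h, show (j : ℕ) + 1 + 1 ≠ j by omega]

theorem offA_of_succ_lt {k : ℕ} (h : k + 1 < n) : offA n k = √k * √(2 * n - k - 1) / 2 := by
  rw [offA, if_neg (show k ≠ n - 1 by omega), Real.sqrt_mul (Nat.cast_nonneg k)]
  ring

theorem offA_of_succ_eq {k : ℕ} (h : k + 1 = n) : offA n k = √(2 * n) * √k / 2 := by
  subst h
  rw [offA, if_pos (Nat.add_sub_cancel k 1).symm, ← Real.sqrt_mul (by positivity)]
  push_cast
  rw [add_sub_cancel_right, show 2 * ((k : ℝ) + 1) * k = 2 ^ 2 * ((k + 1) * k / 2) by ring,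
    Real.sqrt_mul' _ (by positivity), Real.sqrt_sq zero_le_two]
  ring

theorem Smat_mul_Dsub_apply_of_succ_eq (h : (i : ℕ) = j + 1) :
    (Smat n * Dsub n) i j = (Amat n * Smat n) i j := by
  rw [isBanded_Smat.mul_apply_eq_single isBanded_Dsub i fun k _ _ _ _ => by omega,
    isBanded_Amat.mul_apply_eq_single isBanded_Smat j fun k _ _ _ _ => by omega,
    Dsub_apply_of_succ_eq h, Amat_apply_of_succ_eq h,
    Smat_apply_self_of_lt (show (j : ℕ) + 1 < n by omega)]
  rcases (by omega : (i : ℕ) + 1 < n ∨ (i : ℕ) + 1 = n) with hi | hi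
  · rw [Smat_apply_self_of_lt hi, offA_of_succ_lt hi, h]
    push_cast
    ring
  · rw [Smat_apply_self_of_eq hi, offA_of_succ_eq hi, h]
    have hn : (n : ℝ) = j + 2 := by norm_cast; omega
    rw [hn]
    push_cast
    ring

theorem Smat_mul_Dsub_apply_self (i : Fin n) :
    (Smat n * Dsub n) i i = (2 * n - i - 2) / 2 * Smat n i i := by
  rcases (by omega : (i : ℕ) + 1 < n ∨ (i : ℕ) + 1 = n) with hi | hi
  · obtain ⟨i', hi'⟩ : ∃ i' : Fin n, (i' : ℕ) = i + 1 := ⟨⟨i + 1, hi⟩, rfl⟩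
    rw [isBanded_Smat.mul_apply_eq_add isBanded_Dsub i i' (by omega) fun k _ _ _ _ => by omega,
      Smat_apply_of_eq_succ hi', Dsub_apply_of_succ_eq hi', Dsub_apply_self_of_lt hi,
      Smat_apply_self_of_lt hi]
    linear_combination (-(√(2 * n - i - 1)) / 2) * Real.sq_sqrt (by positivity : (0 : ℝ) ≤ i + 1)
  · rw [isBanded_Smat.mul_apply_eq_single isBanded_Dsub i fun k _ _ _ _ => by omega,
      Dsub_apply_self_of_eq hi]
    have hn : (n : ℝ) = i + 1 := by norm_cast; omega
    rw [hn]
    ring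

theorem Amat_mul_Smat_apply_self (i : Fin n) :
    (Amat n * Smat n) i i = (2 * n - i - 2) / 2 * Smat n i i := by
  by_cases hi : (i : ℕ) = 0
  · rw [isBanded_Amat.mul_apply_eq_single isBanded_Smat i fun k _ _ _ _ => by omega,
      Amat_apply_self, hi]
    ring
  obtain ⟨c, hc⟩ : ∃ c : Fin n, (i : ℕ) = c + 1 := ⟨⟨i - 1, by omega⟩, by simp; omega⟩
  rw [isBanded_Amat.mul_apply_eq_add isBanded_Smat c i (by omega) fun k _ _ _ _ => by omega,
    Amat_apply_of_succ_eq hc, Smat_apply_of_eq_succ hc, Amat_apply_self,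
    show ((c : ℕ) : ℝ) + 1 = i by exact_mod_cast hc.symm]
  have hsq : √(i : ℝ) ^ 2 = i := Real.sq_sqrt (Nat.cast_nonneg _)
  rcases (by omega : (i : ℕ) + 1 < n ∨ (i : ℕ) + 1 = n) with hi | hi
  · rw [offA_of_succ_lt hi, Smat_apply_self_of_lt hi]
    linear_combination (-(√(2 * n - i - 1)) / 2) * hsq
  · rw [offA_of_succ_eq hi, Smat_apply_self_of_eq hi]
    linear_combination (-(√(2 * n)) / 2) * hsq

theorem Smat_mul_Dsub_apply_of_eq_succ (h : (j : ℕ) = i + 1) :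
    (Smat n * Dsub n) i j = (Amat n * Smat n) i j := by
  rw [isBanded_Smat.mul_apply_eq_add isBanded_Dsub i j (by omega) fun k _ _ _ _ => by omega,
    isBanded_Amat.mul_apply_eq_add isBanded_Smat i j (by omega) fun k _ _ _ _ => by omega,
    Smat_apply_self_of_lt (show (i : ℕ) + 1 < n by omega), Smat_apply_of_eq_succ h,
    Dsub_apply_of_eq_succ h, Amat_apply_self, Amat_apply_of_eq_succ h]
  have hj : ((j : ℕ) : ℝ) = i + 1 := by exact_mod_cast h
  rcases (by omega : (j : ℕ) + 1 < n ∨ (j : ℕ) + 1 = n) with hjn | hjn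
  · rw [Dsub_apply_self_of_lt hjn, offA_of_succ_lt hjn, Smat_apply_self_of_lt hjn, hj]
    have hi : (i : ℝ) + 2 < n := by norm_cast; omega
    have h₁ := Real.sq_sqrt (show (0 : ℝ) ≤ 2 * n - i - 1 by linarith)
    have h₂ := Real.sq_sqrt (show (0 : ℝ) ≤ 2 * n - (i + 1) - 1 by linarith)
    linear_combination (√(i + 1 : ℝ) / 2) * (h₁ - h₂)
  · rw [Dsub_apply_self_of_eq hjn, offA_of_succ_eq hjn, Smat_apply_self_of_eq hjn, hj]
    have hn : (n : ℝ) = i + 2 := by norm_cast; omega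
    have h₁ := Real.sq_sqrt (show (0 : ℝ) ≤ 2 * n - i - 1 by linarith)
    have h₂ := Real.sq_sqrt (show (0 : ℝ) ≤ 2 * n by linarith)
    linear_combination (√(i + 1 : ℝ) / 2) * (h₁ - h₂ + hn)

theorem Smat_mul_Dsub_apply_of_eq_add_two (h : (j : ℕ) = i + 2) :
    (Smat n * Dsub n) i j = (Amat n * Smat n) i j := by
  obtain ⟨m, hm⟩ : ∃ m : Fin n, (m : ℕ) = i + 1 := ⟨⟨i + 1, by omega⟩, rfl⟩
  rw [isBanded_Smat.mul_apply_eq_single isBanded_Dsub m fun k _ _ _ _ => by omega,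
    isBanded_Amat.mul_apply_eq_single isBanded_Smat m fun k _ _ _ _ => by omega,
    Smat_apply_of_eq_succ hm, Dsub_apply_of_eq_succ (show (j : ℕ) = m + 1 by omega),
    Amat_apply_of_eq_succ hm, Smat_apply_of_eq_succ (show (j : ℕ) = m + 1 by omega),
    offA_of_succ_lt (show (m : ℕ) + 1 < n by omega), hm]
  push_cast
  ring

theorem Smat_apply_self_pos (i : Fin n) : 0 < Smat n i i := by
  rcases (by omega : (i : ℕ) + 1 < n ∨ (i : ℕ) + 1 = n) with hi | hi
  · rw [Smat_apply_self_of_lt hi, Real.sqrt_pos]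
    have : (i : ℝ) + 1 < n := by exact_mod_cast hi
    linarith
  · rw [Smat_apply_self_of_eq hi, Real.sqrt_pos]
    have : (0 : ℝ) < n := by exact_mod_cast i.pos
    linarith

theorem isUnit_Smat : IsUnit (Smat n) := by
  rw [isUnit_iff_isUnit_det, det_of_isUpperTriangular fun i j h => isBanded_Smat i j (.inl h),
    isUnit_iff_ne_zero, Finset.prod_ne_zero_iff]
  exact fun i _ => (Smat_apply_self_pos i).ne'

theorem stmt_6_general (n : ℕ) :
    Smat n * Dsub n = Amat n * Smat n ∧ IsUnit (Smat n) := by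
  refine ⟨Matrix.ext fun i j => ?_, isUnit_Smat⟩
  rcases (by omega : (i : ℕ) = j + 1 ∨ (i : ℕ) = j ∨ (j : ℕ) = i + 1 ∨ (j : ℕ) = i + 2 ∨
      (i : ℕ) + 2 < j ∨ (j : ℕ) + 1 < i) with h | h | h | h | h
  · exact Smat_mul_Dsub_apply_of_succ_eq h
  · rw [Fin.ext h, Smat_mul_Dsub_apply_self, Amat_mul_Smat_apply_self]
  · exact Smat_mul_Dsub_apply_of_eq_succ h
  · exact Smat_mul_Dsub_apply_of_eq_add_two h
  all_goals rw [isBanded_Smat.mul isBanded_Dsub i j (by omega),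
    isBanded_Amat.mul isBanded_Smat i j (by omega)]

theorem stmt_6 (n : ℕ) (hn : 2 ≤ n) :
    Smat n * Dsub n = Amat n * Smat n ∧ IsUnit (Smat n) :=
  stmt_6_general n
end

section
/- If two symmetric matrices satisfy −LLᵀ = A(n+1) − 2nI with L as given, then A(n+1) has eigenvalue 2n; in particular the singular matrix C = A(n+1) − 2nI has eigenvalue 0 since it equals −LLᵀ with L having a zero in its last diagonal entry. -/
theorem Matrix.mem_spectrum_of_det_sub_smul_one_eq_zero {ι R : Type*} [Fintype ι] [DecidableEq ι]
    [CommRing R] [Nontrivial R] {A : Matrix ι ι R} {c : R} (h : (A - c • 1).det = 0) :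
    c ∈ spectrum R A := by
  rw [spectrum.mem_iff, Algebra.algebraMap_eq_smul_one, ← neg_sub, Matrix.isUnit_iff_isUnit_det,
    Matrix.det_neg, h, mul_zero]
  exact not_isUnit_zero

lemma Lmat_isLowerTriangular (n : ℕ) : (Lmat n).IsLowerTriangular := by
  intro i j (hij : (i : ℕ) < j)
  simp only [Lmat, Matrix.of_apply]
  rw [if_neg (by omega), if_neg (by omega)]

lemma Lmat_last_last (n : ℕ) : Lmat n (Fin.last n) (Fin.last n) = 0 := by
  simp [Lmat]

lemma det_Lmat (n : ℕ) : (Lmat n).det = 0 := by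
  rw [Matrix.det_of_isLowerTriangular _ (Lmat_isLowerTriangular n)]
  exact Finset.prod_eq_zero (Finset.mem_univ _) (Lmat_last_last n)

theorem stmt_7_general (n : ℕ)
    (hfact : Amat (n + 1) - (2 * (n : ℝ)) • (1 : Matrix (Fin (n + 1)) (Fin (n + 1)) ℝ)
      = -(Lmat n * (Lmat n).transpose)) :
    (2 * (n : ℝ)) ∈ spectrum ℝ (Amat (n + 1)) := by
  apply Matrix.mem_spectrum_of_det_sub_smul_one_eq_zero
  rw [hfact, Matrix.det_neg, Matrix.det_mul, det_Lmat, zero_mul, mul_zero]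

theorem stmt_7 (n : ℕ) (hn : 1 ≤ n)
    (hfact : Amat (n + 1) - (2 * (n : ℝ)) • (1 : Matrix (Fin (n + 1)) (Fin (n + 1)) ℝ)
      = -(Lmat n * (Lmat n).transpose)) :
    (2 * (n : ℝ)) ∈ spectrum ℝ (Amat (n + 1)) :=
  stmt_7_general n hfact
end

section
/- With masses m_j as in the spring-mass solution (m_{n−i} = 2α²(n+i−1)!(n−i−1)!/((n−1)!)² for i ≥ 1, m_n = α²) and B(n) as defined, the stiffness matrix C = M^{1/2}B(n)M^{1/2} has off-diagonal entries C_{i,i+1} = −k_{i+1} where k_{i+1} = α²·i!(2n−i−1)!/((n−1)!)² for i = 1,…,n−1. -/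
/-- The matrix `B(n) = A(n) + I` with negative off-diagonal signs: diagonal `n`,
off-diagonal `-offA n k` at (1-indexed) position `(k, k+1)`. -/
noncomputable def Bmat (n : ℕ) : Matrix (Fin n) (Fin n) ℝ :=
  Matrix.of fun i j =>
    if (i : ℕ) = (j : ℕ) then (n : ℝ)
    else if (i : ℕ) + 1 = (j : ℕ) then -offA n ((i : ℕ) + 1)
    else if (j : ℕ) + 1 = (i : ℕ) then -offA n ((j : ℕ) + 1)
    else 0

/-- The masses: `m_j = 2α² (2n-j-1)! (j-1)! / ((n-1)!)²` for `1 ≤ j ≤ n-1`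
(i.e. `m_{n-i} = 2α² (n+i-1)! (n-i-1)! / ((n-1)!)²` for `i ≥ 1`) and `m_n = α²`. -/
noncomputable def massVal (n j : ℕ) (α : ℝ) : ℝ :=
  if j = n then α ^ 2
  else 2 * α ^ 2 * (Nat.factorial (2 * n - j - 1)) * (Nat.factorial (j - 1))
    / ((Nat.factorial (n - 1)) : ℝ) ^ 2

/-!
Since `M` is diagonal, `C i (i+1) = √m_{i+1} · B i (i+1) · √m_{i+2} = -√(m_{i+1} q m_{i+2})`, where
`q = offA n (i+1) ^ 2`. The factorials in the masses telescope against the two factors of `q`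
(`i! (i+1) = (i+1)!` and `(2n-i-3)! (2n-i-2) = (2n-i-2)!`), so `m_{i+1} q m_{i+2} = k_{i+1}²`.
-/

/-- The spring constant `k_{i+1}`. -/
noncomputable def springConst (n i : ℕ) (α : ℝ) : ℝ :=
  α ^ 2 * (i + 1).factorial * (2 * n - i - 2).factorial / ((n - 1).factorial : ℝ) ^ 2

lemma springConst_nonneg (n i : ℕ) (α : ℝ) : 0 ≤ springConst n i α := by
  unfold springConst; positivity

lemma sqrt_mul_sqrt_mul_sqrt_eq {a b c k : ℝ} (ha : 0 ≤ a) (hb : 0 ≤ b) (hk : 0 ≤ k)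
    (h : a * b * c = k ^ 2) : √a * √b * √c = k := by
  rw [← Real.sqrt_mul ha, ← Real.sqrt_mul (mul_nonneg ha hb), h, Real.sqrt_sq hk]

lemma diagonal_mul_mul_diagonal_apply {m R : Type*} [Fintype m] [DecidableEq m]
    [NonUnitalNonAssocSemiring R] (d e : m → R) (A : Matrix m m R) (i j : m) :
    (Matrix.diagonal d * A * Matrix.diagonal e) i j = d i * A i j * e j := by
  rw [Matrix.mul_diagonal, Matrix.diagonal_mul]

lemma Bmat_apply_succ {n i : ℕ} (h : i + 1 < n) :
    Bmat n ⟨i, Nat.lt_of_succ_lt h⟩ ⟨i + 1, h⟩ = -offA n (i + 1) := by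
  simp [Bmat]

lemma massVal_succ_of_lt {n i : ℕ} (α : ℝ) (h : i + 1 < n) :
    massVal n (i + 1) α
      = 2 * α ^ 2 * (2 * n - i - 2).factorial * i.factorial / ((n - 1).factorial : ℝ) ^ 2 := by
  rw [massVal, if_neg (by omega)]
  congr 3

lemma massVal_succ_nonneg {n i : ℕ} (α : ℝ) (h : i + 1 < n) : 0 ≤ massVal n (i + 1) α := by
  rw [massVal_succ_of_lt α h]; positivity

lemma massVal_mul_offA_sq_mul_massVal_of_lt {n i : ℕ} (α : ℝ) (h : i + 2 < n) :
    massVal n (i + 1) α * ((i + 1) * (2 * n - i - 2) / 4) * massVal n (i + 2) α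
      = springConst n i α ^ 2 := by
  obtain ⟨j, hj⟩ : ∃ j, 2 * n - i - 2 = j + 1 := ⟨2 * n - i - 3, by omega⟩
  have hcast : ((2 * n - i - 2 : ℕ) : ℝ) = 2 * n - i - 2 := by
    rw [Nat.cast_sub (by omega), Nat.cast_sub (by omega)]; push_cast; ring
  rw [massVal_succ_of_lt α (by omega), massVal_succ_of_lt α h, springConst,
    show 2 * n - (i + 1) - 2 = j by omega, hj, ← hcast, hj]
  have : ((n - 1).factorial : ℝ) ≠ 0 := by positivity
  push_cast [Nat.factorial_succ]
  field_simp
  ring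

lemma massVal_mul_offA_sq_mul_massVal_of_eq {n i : ℕ} (α : ℝ) (h : i + 2 = n) :
    massVal n (i + 1) α * (n * (n - 1) / 2) * massVal n (i + 2) α = springConst n i α ^ 2 := by
  subst h
  rw [massVal_succ_of_lt α (by omega), springConst, massVal, if_pos rfl,
    show 2 * (i + 2) - i - 2 = i + 2 by omega, show i + 2 - 1 = i + 1 by omega]
  have : (i.factorial : ℝ) ≠ 0 := by positivity
  push_cast [Nat.factorial_succ]
  field_simp
  ring

lemma sqrt_massVal_mul_offA_mul_sqrt_massVal {n i : ℕ} (α : ℝ) (h : i + 1 < n) :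
    √(massVal n (i + 1) α) * offA n (i + 1) * √(massVal n (i + 2) α) = springConst n i α := by
  have hm := massVal_succ_nonneg α h
  rcases (show i + 2 ≤ n by omega).eq_or_lt with hlast | hlt
  · rw [offA, if_pos (by omega)]
    have : (2 : ℝ) ≤ n := by exact_mod_cast (show 2 ≤ n by omega)
    exact sqrt_mul_sqrt_mul_sqrt_eq hm (by nlinarith) (springConst_nonneg n i α)
      (massVal_mul_offA_sq_mul_massVal_of_eq α hlast)
  · rw [offA, if_neg (by omega), show (1 / 2 : ℝ) = √(1 / 4) by
      rw [show (1 / 4 : ℝ) = (1 / 2) ^ 2 by norm_num, Real.sqrt_sq (by norm_num)],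
      ← Real.sqrt_mul (by norm_num)]
    have : (i : ℝ) + 3 ≤ n := by exact_mod_cast hlt
    refine sqrt_mul_sqrt_mul_sqrt_eq hm (by push_cast; nlinarith) (springConst_nonneg n i α) ?_
    rw [← massVal_mul_offA_sq_mul_massVal_of_lt α hlt]
    push_cast
    ring

theorem stmt_17 (n : ℕ) (α : ℝ) :
    ∀ (i : ℕ) (h : i + 1 < n),
      ((Matrix.diagonal fun j : Fin n => Real.sqrt (massVal n ((j : ℕ) + 1) α)) * Bmat n *
          (Matrix.diagonal fun j : Fin n => Real.sqrt (massVal n ((j : ℕ) + 1) α)))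
        ⟨i, by omega⟩ ⟨i + 1, h⟩
      = -(α ^ 2 * (Nat.factorial (i + 1)) * (Nat.factorial (2 * n - i - 2))
          / ((Nat.factorial (n - 1)) : ℝ) ^ 2) := by
  intro i h
  rw [diagonal_mul_mul_diagonal_apply, Bmat_apply_succ h, mul_neg, neg_mul,
    sqrt_massVal_mul_offA_mul_sqrt_massVal α h, springConst]
end

section
/- For n ≥ 2 and any two strictly interlaced real sequences λ₁ < λ₁° < λ₂ < ⋯ < λ_{n−1}° < λ_n, there exists a unique real symmetric tridiagonal matrix B with strictly negative off-diagonal entries such that B has eigenvalues (λ_i)₁ⁿ and its leading principal submatrix B° has eigenvalues (λ_i°)₁^{n−1}. -/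
/-!
Expanding the determinant along the last row gives the three-term recurrence
`χ_B = (X - a) χ_{B°} - b² χ_{B°°}`, where `a` and `b` are the last diagonal and the last
off-diagonal entry of the tridiagonal matrix `B`.

Existence, by induction on `n`: dividing `p = ∏ (X - λᵢ)` by `q = ∏ (X - λᵢ°)` gives
`p = (X - a) q - r` with `deg r ≤ n - 2`. At the roots of `q` we have `r = -p`, and `p` changes
sign between consecutive `λᵢ°` because exactly one `λⱼ` lies between them. Hence `r` has `n - 2`
roots `νᵢ` interlacing the `λᵢ°`, so `r = c ∏ (X - νᵢ)`, and `c > 0` because `p < 0` at the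
largest `λᵢ°`. The Jacobi matrix for `(λ°, ν)`, bordered by `a` and `-√c`, is the required `B`.

Uniqueness: `deg (b² χ_{B°°}) < deg χ_{B°}`, so the recurrence is division with remainder by the
monic `χ_{B°}`. Thus `χ_B` and `χ_{B°}` determine `a`, `b²` (hence `b`, as `b < 0`) and
`χ_{B°°}`, and induction applies to `B°`.
-/

open Polynomial

theorem prod_neg_of_unique_neg {R ι : Type*} [CommRing R] [LinearOrder R] [IsStrictOrderedRing R]
    [Fintype ι] {g : ι → R} (k : ι) (hk : g k < 0) (h : ∀ j ≠ k, 0 < g j) :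
    ∏ j, g j < 0 := by
  classical
  rw [← Finset.mul_prod_erase Finset.univ g (Finset.mem_univ k)]
  exact mul_neg_of_neg_of_pos hk (Finset.prod_pos fun j hj => h j (Finset.ne_of_mem_erase hj))

theorem exists_mem_Ioo_eq_zero_of_mul_neg {α : Type*} [ConditionallyCompleteLinearOrder α]
    [TopologicalSpace α] [OrderTopology α] [DenselyOrdered α] {f : α → ℝ} {a b : α}
    (hab : a ≤ b) (hf : ContinuousOn f (Set.Icc a b)) (h : f a * f b < 0) :
    ∃ c ∈ Set.Ioo a b, f c = 0 := by
  rcases mul_neg_iff.1 h with ⟨ha, hb⟩ | ⟨ha, hb⟩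
  · exact intermediate_value_Ioo' hab hf ⟨hb, ha⟩
  · exact intermediate_value_Ioo hab hf ⟨ha, hb⟩

namespace Polynomial

theorem eq_of_X_sub_C_mul_sub_eq {R : Type*} [CommRing R] {q r r' : R[X]} {a a' : R}
    (hq : q.Monic) (hr : r.degree < q.degree) (hr' : r'.degree < q.degree)
    (h : (X - C a) * q - r = (X - C a') * q - r') : a = a' ∧ r = r' := by
  have quotient_remainder : ∀ {a : R} {r : R[X]}, r.degree < q.degree →
      ((X - C a) * q - r) /ₘ q = X - C a ∧ ((X - C a) * q - r) %ₘ q = -r :=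
    fun hr => div_modByMonic_unique _ _ hq ⟨by ring, by rwa [degree_neg]⟩
  obtain ⟨hdiv, hmod⟩ := quotient_remainder (a := a) hr
  obtain ⟨hdiv', hmod'⟩ := quotient_remainder (a := a') hr'
  rw [h] at hdiv hmod
  exact ⟨C_inj.1 (sub_right_injective (hdiv.symm.trans hdiv')),
    neg_injective (hmod.symm.trans hmod')⟩

theorem exists_eq_X_sub_C_mul_sub {R : Type*} [CommRing R] [Nontrivial R] {p q : R[X]}
    (hp : p.Monic) (hq : q.Monic) (hdeg : p.natDegree = q.natDegree + 1) :
    ∃ a r, r.degree < q.degree ∧ p = (X - C a) * q - r := by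
  have hqp : q.degree ≤ p.degree := by
    rw [degree_eq_natDegree hq.ne_zero, degree_eq_natDegree hp.ne_zero]
    exact_mod_cast (by omega : q.natDegree ≤ p.natDegree)
  have hquot : (p /ₘ q).Monic := (leadingCoeff_divByMonic_of_monic hq hqp).trans hp
  have hquot_deg : (p /ₘ q).natDegree = 1 := by
    rw [natDegree_divByMonic _ hq]
    omega
  refine ⟨-(p /ₘ q).coeff 0, -(p %ₘ q), (degree_neg _).trans_lt (degree_modByMonic_lt _ hq), ?_⟩
  conv_lhs => rw [← modByMonic_add_div p q, hquot.eq_X_add_C hquot_deg]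
  simp only [map_neg]
  ring

theorem eq_C_leadingCoeff_mul_prod_X_sub_C {R : Type*} [CommRing R] [IsDomain R] {n : ℕ}
    {r : R[X]} (hr : r ≠ 0) (hdeg : r.natDegree ≤ n) {ν : Fin n → R}
    (hν : Function.Injective ν) (hroot : ∀ i, r.IsRoot (ν i)) :
    r = C r.leadingCoeff * ∏ i, (X - C (ν i)) := by
  have hnodup : (Finset.univ.val.map ν).Nodup := Finset.univ.nodup.map hν
  have hle : Finset.univ.val.map ν ≤ r.roots :=
    (Multiset.le_iff_subset hnodup).2 fun x hx => by
      obtain ⟨i, -, rfl⟩ := Multiset.mem_map.1 hx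
      exact (mem_roots hr).2 (hroot i)
  have hroots : Finset.univ.val.map ν = r.roots :=
    Multiset.eq_of_le_of_card_le hle (by simpa using (card_roots' r).trans hdeg)
  have hcard : Multiset.card r.roots = r.natDegree :=
    le_antisymm (card_roots' r) (by simpa [← hroots] using hdeg)
  conv_lhs => rw [← C_leadingCoeff_mul_prod_multiset_X_sub_C hcard, ← hroots, Multiset.map_map]
  rfl

section Sign

variable {R ι : Type*} [CommRing R] [LinearOrder R] [IsStrictOrderedRing R] [Fintype ι]

theorem eval_prod_X_sub_C_neg (f : ι → R) {x : R} (k : ι) (hk : x < f k)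
    (h : ∀ j ≠ k, f j < x) : eval x (∏ j, (X - C (f j))) < 0 := by
  rw [eval_prod]
  exact prod_neg_of_unique_neg k (by simpa using hk) fun j hj => by simpa using h j hj

theorem eval_mul_eval_prod_X_sub_C_neg (f : ι → R) {x y : R} (k : ι)
    (hk : x < f k ∧ f k < y) (h : ∀ j ≠ k, f j < x ∨ y < f j) :
    eval x (∏ j, (X - C (f j))) * eval y (∏ j, (X - C (f j))) < 0 := by
  rw [eval_prod, eval_prod, ← Finset.prod_mul_distrib]
  refine prod_neg_of_unique_neg k ?_ fun j hj => ?_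
  · simp only [eval_sub, eval_X, eval_C]
    exact mul_neg_of_neg_of_pos (by linarith) (by linarith)
  · simp only [eval_sub, eval_X, eval_C]
    rcases h j hj with hj | hj
    · exact mul_pos (by linarith) (by linarith)
    · exact mul_pos_of_neg_of_neg (by linarith) (by linarith)

end Sign

end Polynomial

namespace Matrix

variable {R : Type*} [CommRing R] {n : ℕ}

/-- `M` bordered by the last row and column `(0, …, 0, b, a)`. -/
def tridiagBorder (M : Matrix (Fin (n + 1)) (Fin (n + 1)) R) (a b : R) :
    Matrix (Fin (n + 2)) (Fin (n + 2)) R :=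
  of fun i j =>
    Fin.lastCases (Fin.lastCases a (fun j => if j = Fin.last n then b else 0) j)
      (fun i => Fin.lastCases (if i = Fin.last n then b else 0) (fun j => M i j) j) i

section tridiagBorder

variable (M : Matrix (Fin (n + 1)) (Fin (n + 1)) R) (a b : R)

@[simp]
theorem tridiagBorder_castSucc_castSucc (i j : Fin (n + 1)) :
    tridiagBorder M a b i.castSucc j.castSucc = M i j := by
  simp [tridiagBorder]

@[simp]
theorem tridiagBorder_castSucc_last (i : Fin (n + 1)) :
    tridiagBorder M a b i.castSucc (Fin.last _) = if i = Fin.last n then b else 0 := by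
  simp [tridiagBorder]

@[simp]
theorem tridiagBorder_last_castSucc (j : Fin (n + 1)) :
    tridiagBorder M a b (Fin.last _) j.castSucc = if j = Fin.last n then b else 0 := by
  simp [tridiagBorder]

@[simp]
theorem tridiagBorder_last_last : tridiagBorder M a b (Fin.last _) (Fin.last _) = a := by
  simp [tridiagBorder]

@[simp]
theorem tridiagBorder_submatrix_castSucc :
    (tridiagBorder M a b).submatrix Fin.castSucc Fin.castSucc = M := by
  ext i j
  simp

theorem det_tridiagBorder :
    (tridiagBorder M a b).det =
      a * M.det - b * b * (M.submatrix Fin.castSucc Fin.castSucc).det := by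
  -- the minor of the entry `b` in the last row
  set N := (tridiagBorder M a b).submatrix Fin.castSucc (Fin.last n).castSucc.succAbove
  have hN : N.det = b * (M.submatrix Fin.castSucc Fin.castSucc).det := by
    rw [det_succ_column N (Fin.last n), Fintype.sum_eq_single (Fin.last n)]
    · have : N.submatrix Fin.castSucc Fin.castSucc = M.submatrix Fin.castSucc Fin.castSucc := by
        ext i j
        simp [N, Fin.succAbove_of_castSucc_lt _ _
          (Fin.castSucc_lt_castSucc_iff.2 (Fin.castSucc_lt_last j))]
      simp [N, this, Fin.succAbove_last, ← two_mul, pow_mul]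
    · intro i hi
      simp [N, hi]
  rw [det_succ_row _ (Fin.last (n + 1)), Fin.sum_univ_castSucc, Fin.sum_univ_castSucc,
    Finset.sum_eq_zero (fun j _ => by simp [Fin.castSucc_ne_last]), Fin.succAbove_last, hN]
  simp [← two_mul, pow_mul]
  ring

end tridiagBorder

theorem charmatrix_submatrix {m l : Type*} [Fintype m] [DecidableEq m] [Fintype l]
    [DecidableEq l]
    (M : Matrix m m R) {e : l → m} (he : Function.Injective e) :
    (M.submatrix e e).charmatrix = M.charmatrix.submatrix e e := by
  ext i j
  simp [charmatrix_apply, diagonal_apply, he.eq_iff]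

theorem charmatrix_tridiagBorder (M : Matrix (Fin (n + 1)) (Fin (n + 1)) R) (a b : R) :
    (tridiagBorder M a b).charmatrix = tridiagBorder M.charmatrix (X - C a) (-C b) := by
  refine Matrix.ext fun i j => ?_
  induction i using Fin.lastCases <;> induction j using Fin.lastCases <;>
    simp [charmatrix_apply, diagonal_apply, Fin.castSucc_ne_last, (Fin.castSucc_ne_last _).symm,
      apply_ite C, neg_ite]

theorem charpoly_tridiagBorder (M : Matrix (Fin (n + 1)) (Fin (n + 1)) R) (a b : R) :
    (tridiagBorder M a b).charpoly =
      (X - C a) * M.charpoly - C (b * b) * (M.submatrix Fin.castSucc Fin.castSucc).charpoly := by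
  rw [charpoly, charmatrix_tridiagBorder, det_tridiagBorder,
    ← charmatrix_submatrix _ (Fin.castSucc_injective _)]
  simp [charpoly]

structure IsJacobi {R : Type*} [Zero R] [LT R] {n : ℕ} (B : Matrix (Fin n) (Fin n) R) :
    Prop where
  isSymm : B.IsSymm
  apply_eq_zero : ∀ i j : Fin n, (i : ℕ) + 1 < j ∨ (j : ℕ) + 1 < i → B i j = 0
  apply_neg : ∀ i j : Fin n, (i : ℕ) + 1 = j → B i j < 0

section IsJacobi

variable {R : Type*} [CommRing R] [PartialOrder R] {n : ℕ}

theorem IsJacobi.submatrix_castSucc {B : Matrix (Fin (n + 1)) (Fin (n + 1)) R}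
    (hB : B.IsJacobi) : (B.submatrix Fin.castSucc Fin.castSucc).IsJacobi where
  isSymm := hB.isSymm.submatrix _
  apply_eq_zero i j := hB.apply_eq_zero i.castSucc j.castSucc
  apply_neg i j := hB.apply_neg i.castSucc j.castSucc

theorem IsJacobi.tridiagBorder {M : Matrix (Fin (n + 1)) (Fin (n + 1)) R} (hM : M.IsJacobi)
    (a : R) {b : R} (hb : b < 0) : (tridiagBorder M a b).IsJacobi where
  isSymm := by
    refine Matrix.ext fun i j => ?_
    induction i using Fin.lastCases <;> induction j using Fin.lastCases <;>
      simp [hM.isSymm.apply]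
  apply_eq_zero i j h := by
    induction i using Fin.lastCases <;> induction j using Fin.lastCases <;>
      simp_all [Fin.ext_iff, hM.apply_eq_zero] <;> omega
  apply_neg i j h := by
    induction i using Fin.lastCases <;> induction j using Fin.lastCases <;>
      simp_all [Fin.ext_iff, hM.apply_neg]
    omega

theorem IsJacobi.exists_eq_tridiagBorder {B : Matrix (Fin (n + 2)) (Fin (n + 2)) R}
    (hB : B.IsJacobi) :
    ∃ M a b, M.IsJacobi ∧ b < 0 ∧ B = Matrix.tridiagBorder M a b := by
  refine ⟨B.submatrix Fin.castSucc Fin.castSucc, B (Fin.last _) (Fin.last _),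
    B (Fin.last n).castSucc (Fin.last _), hB.submatrix_castSucc,
    hB.apply_neg _ _ (by simp), Matrix.ext fun i j => ?_⟩
  induction i using Fin.lastCases <;> induction j using Fin.lastCases
  case cast.cast => simp
  case last.last => simp
  case cast.last i =>
    rw [tridiagBorder_castSucc_last]
    split_ifs with hi
    · rw [hi]
    · exact hB.apply_eq_zero _ _ (Or.inl (by simp [Fin.ext_iff] at hi ⊢; omega))
  case last.cast j =>
    rw [tridiagBorder_last_castSucc]
    split_ifs with hj
    · rw [hj, hB.isSymm.apply]
    · exact hB.apply_eq_zero _ _ (Or.inr (by simp [Fin.ext_iff] at hj ⊢; omega))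

end IsJacobi

theorem IsJacobi.eq_of_charpoly_eq {K : Type*} [Field K] [LinearOrder K]
    [IsStrictOrderedRing K] {n : ℕ} {B B' : Matrix (Fin (n + 1)) (Fin (n + 1)) K}
    (hB : B.IsJacobi) (hB' : B'.IsJacobi)
    (h : B.charpoly = B'.charpoly)
    (h' : (B.submatrix Fin.castSucc Fin.castSucc).charpoly =
      (B'.submatrix Fin.castSucc Fin.castSucc).charpoly) :
    B = B' := by
  induction n with
  | zero =>
    have h00 : B 0 0 = B' 0 0 := by
      rw [← trace_fin_one B, ← trace_fin_one B', trace_eq_neg_charpoly_coeff,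
        trace_eq_neg_charpoly_coeff, h]
    ext i j
    rwa [Fin.fin_one_eq_zero i, Fin.fin_one_eq_zero j]
  | succ n ih =>
    obtain ⟨M, a, b, hM, hb, rfl⟩ := hB.exists_eq_tridiagBorder
    obtain ⟨M', a', b', hM', hb', rfl⟩ := hB'.exists_eq_tridiagBorder
    simp only [charpoly_tridiagBorder, tridiagBorder_submatrix_castSucc] at h h'
    have hdeg : ∀ {N : Matrix (Fin (n + 1)) (Fin (n + 1)) K} {c : K}, c < 0 →
        (C (c * c) * (N.submatrix Fin.castSucc Fin.castSucc).charpoly).degree <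
          M'.charpoly.degree := by
      intro N c hc
      rw [degree_C_mul (mul_self_ne_zero.2 hc.ne), charpoly_degree_eq_dim, charpoly_degree_eq_dim]
      simp only [Fintype.card_fin]
      exact_mod_cast n.lt_succ_self
    rw [h'] at h
    obtain ⟨rfl, hs⟩ :=
      Polynomial.eq_of_X_sub_C_mul_sub_eq (charpoly_monic _) (hdeg hb) (hdeg hb') h
    have hbb : b * b = b' * b' := by
      simpa [(charpoly_monic _).leadingCoeff] using congrArg leadingCoeff hs
    have hb_eq : b = b' :=
      (mul_self_eq_mul_self_iff.1 hbb).resolve_right fun h => by linarith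
    subst hb_eq
    rw [ih hM hM' h' (mul_left_cancel₀ (C_ne_zero.2 (mul_self_ne_zero.2 hb.ne)) hs)]

end Matrix

def Interlaces {α : Type*} [Preorder α] {n : ℕ} (μ : Fin n → α) (lam : Fin (n + 1) → α) : Prop :=
  ∀ i, lam i.castSucc < μ i ∧ μ i < lam i.succ

namespace Interlaces

section Preorder

variable {α : Type*} [Preorder α] {n : ℕ} {μ : Fin n → α} {lam : Fin (n + 1) → α}

theorem strictMono_right (h : Interlaces μ lam) : StrictMono lam :=
  Fin.strictMono_iff_lt_succ.2 fun i => (h i).1.trans (h i).2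

theorem strictMono_left (h : Interlaces μ lam) : StrictMono μ := fun i j hij =>
  calc μ i < lam i.succ := (h i).2
    _ ≤ lam j.castSucc := h.strictMono_right.monotone (Fin.succ_le_castSucc_iff.2 hij)
    _ < μ j := (h j).1

theorem apply_lt_of_le_castSucc (h : Interlaces μ lam) {i : Fin n} {j : Fin (n + 1)}
    (hj : j ≤ i.castSucc) : lam j < μ i :=
  (h.strictMono_right.monotone hj).trans_lt (h i).1

theorem lt_apply_of_succ_le (h : Interlaces μ lam) {i : Fin n} {j : Fin (n + 1)}
    (hj : i.succ ≤ j) : μ i < lam j :=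
  (h i).2.trans_le (h.strictMono_right.monotone hj)

end Preorder

section OrderedRing

variable {R : Type*} [CommRing R] [LinearOrder R] [IsStrictOrderedRing R] {n : ℕ}
    {μ : Fin (n + 1) → R} {lam : Fin (n + 2) → R}

theorem eval_last_neg (h : Interlaces μ lam) :
    eval (μ (Fin.last n)) (∏ j, (X - C (lam j))) < 0 := by
  refine eval_prod_X_sub_C_neg lam (Fin.last _) ((h _).2.trans_eq (by rw [Fin.succ_last])) ?_
  intro j hj
  exact h.apply_lt_of_le_castSucc (Fin.le_castSucc_iff.2 (Fin.lt_last_iff_ne_last.2 hj))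

theorem eval_mul_eval_neg (h : Interlaces μ lam) (i : Fin n) :
    eval (μ i.castSucc) (∏ j, (X - C (lam j))) * eval (μ i.succ) (∏ j, (X - C (lam j))) < 0 :=
    by
  refine eval_mul_eval_prod_X_sub_C_neg lam i.succ.castSucc
    ⟨(h _).2.trans_eq (by rw [Fin.succ_castSucc]), (h _).1⟩ fun j hj => ?_
  rcases lt_or_gt_of_ne hj with hj | hj
  · exact Or.inl (h.apply_lt_of_le_castSucc (by simp [Fin.le_def, Fin.lt_def] at hj ⊢; omega))
  · exact Or.inr (h.lt_apply_of_succ_le (by simp [Fin.le_def, Fin.lt_def] at hj ⊢; omega))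

end OrderedRing

theorem exists_eq_X_sub_C_mul_sub {n : ℕ} {lam : Fin (n + 2) → ℝ}
    {μ : Fin (n + 1) → ℝ} (h : Interlaces μ lam) :
    ∃ (a c : ℝ) (ν : Fin n → ℝ), 0 < c ∧ Interlaces ν μ ∧
      ∏ i, (X - C (lam i)) = (X - C a) * ∏ i, (X - C (μ i)) - C c * ∏ i, (X - C (ν i)) := by
  obtain ⟨a, r, hr, hp⟩ := Polynomial.exists_eq_X_sub_C_mul_sub
    (monic_prod_X_sub_C lam Finset.univ) (monic_prod_X_sub_C μ Finset.univ)
    (by simp [natDegree_finsetProd_X_sub_C_eq_card])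
  have hr_eval : ∀ i, eval (μ i) r = -eval (μ i) (∏ j, (X - C (lam j))) := fun i => by
    have hq : eval (μ i) (∏ j, (X - C (μ j))) = 0 := by
      rw [eval_prod]
      exact Finset.prod_eq_zero (Finset.mem_univ i) (by simp)
    rw [hp, eval_sub, eval_mul, hq]
    ring
  have hν : ∀ i : Fin n, ∃ z ∈ Set.Ioo (μ i.castSucc) (μ i.succ), eval z r = 0 := fun i =>
    exists_mem_Ioo_eq_zero_of_mul_neg (h.strictMono_left Fin.castSucc_lt_succ).le
      r.continuousOn (by simpa [hr_eval] using h.eval_mul_eval_neg i)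
  choose ν hνμ hroot using hν
  have hr_last : 0 < eval (μ (Fin.last n)) r := by
    rw [hr_eval]
    exact neg_pos.2 h.eval_last_neg
  have hr0 : r ≠ 0 := by
    rintro rfl
    simp at hr_last
  have hr_deg : r.natDegree ≤ n := by
    rw [degree_eq_natDegree (monic_prod_X_sub_C _ _).ne_zero,
      natDegree_finsetProd_X_sub_C_eq_card, ← natDegree_lt_iff_degree_lt hr0] at hr
    simpa [Nat.lt_succ_iff] using hr
  have hr_prod := eq_C_leadingCoeff_mul_prod_X_sub_C hr0 hr_deg
    (Interlaces.strictMono_left hνμ).injective hroot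
  have hc : 0 < r.leadingCoeff := by
    have hprod : 0 < ∏ i, (μ (Fin.last n) - ν i) := Finset.prod_pos fun i _ => sub_pos.2
      ((hνμ i).2.trans_le ((Interlaces.strictMono_right hνμ).monotone (Fin.le_last _)))
    rw [hr_prod] at hr_last
    simp only [eval_mul, eval_C, eval_prod, eval_sub, eval_X] at hr_last
    exact pos_of_mul_pos_left hr_last hprod.le
  exact ⟨a, r.leadingCoeff, ν, hc, hνμ, hp.trans (congrArg _ hr_prod)⟩

end Interlaces

theorem exists_isJacobi_charpoly_eq {n : ℕ} {lam : Fin (n + 1) → ℝ} {μ : Fin n → ℝ}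
    (h : Interlaces μ lam) :
    ∃ B : Matrix (Fin (n + 1)) (Fin (n + 1)) ℝ, B.IsJacobi ∧
      B.charpoly = ∏ i, (X - C (lam i)) ∧
      (B.submatrix Fin.castSucc Fin.castSucc).charpoly = ∏ i, (X - C (μ i)) := by
  induction n with
  | zero =>
    refine ⟨Matrix.diagonal lam, ⟨Matrix.isSymm_diagonal _, fun i j _ => ?_, fun i j _ => ?_⟩,
      Matrix.charpoly_diagonal _, by simp [Matrix.charpoly_isEmpty]⟩ <;> omega
  | succ n ih =>
    obtain ⟨a, c, ν, hc, hν, hp⟩ := h.exists_eq_X_sub_C_mul_sub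
    obtain ⟨M, hM, hMp, hMq⟩ := ih hν
    refine ⟨M.tridiagBorder a (-√c), hM.tridiagBorder a (neg_neg_of_pos (Real.sqrt_pos.2 hc)),
      ?_, by simpa using hMp⟩
    rw [Matrix.charpoly_tridiagBorder, hMp, hMq, neg_mul_neg, Real.mul_self_sqrt hc.le, hp]

theorem stmt_19 (n : ℕ) (hn : 2 ≤ n) (lam : Fin n → ℝ) (lamo : Fin (n - 1) → ℝ)
    (hinter : ∀ i : Fin (n - 1),
      lam ⟨i, by have := i.isLt; omega⟩ < lamo i ∧
      lamo i < lam ⟨(i : ℕ) + 1, by have := i.isLt; omega⟩) :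
    ∃! B : Matrix (Fin n) (Fin n) ℝ,
      B.IsSymm ∧
      (∀ i j : Fin n, (i : ℕ) + 1 < (j : ℕ) ∨ (j : ℕ) + 1 < (i : ℕ) → B i j = 0) ∧
      (∀ i j : Fin n, (i : ℕ) + 1 = (j : ℕ) → B i j < 0) ∧
      Matrix.charpoly B = ∏ i : Fin n, (X - C (lam i)) ∧
      Matrix.charpoly (B.submatrix (Fin.castLE (Nat.sub_le n 1)) (Fin.castLE (Nat.sub_le n 1)))
        = ∏ i : Fin (n - 1), (X - C (lamo i)) := by
  obtain ⟨m, rfl⟩ : ∃ m, n = m + 1 := ⟨n - 1, by omega⟩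
  obtain ⟨B, hB, hp, hq⟩ := exists_isJacobi_charpoly_eq (μ := lamo) hinter
  refine ⟨B, ⟨hB.isSymm, hB.apply_eq_zero, hB.apply_neg, hp, hq⟩, ?_⟩
  rintro B' ⟨hsymm, hzero, hneg, hp', hq'⟩
  exact Matrix.IsJacobi.eq_of_charpoly_eq ⟨hsymm, hzero, hneg⟩ hB (hp'.trans hp.symm)
    (hq'.trans hq.symm)
end
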